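/- arXiv:2504.03517 — 3 statements merged into one kernel-verified Lean document; each statement's English description precedes it below -/
import Mathlib

section
/- Let Prop := {p, p̄} (two distinct propositions). Let L' be a monotone fragment of LTL(Prop) such that X ∈ Op', U ∉ Op', and Op' contains at least one of the atomic propositions p, p̄. Then for every n ∈ ℕ there exists a sample S = (𝒫,𝒩) of ultimately periodic words in W(Prop) with k := Σ_{w ∈ 𝒫∪𝒩} ‖w‖ ≥ n such that some L'-formula is S-separating and every S-separating L'-formula has size at least 2^{√k}. -/
open scoped Classical

/-- Formulas of linear temporal logic `LTL(Prop)`: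
`φ ::= p | ¬φ | φ∨φ | φ∧φ | Xφ | Fφ | Gφ | φUφ`. -/
inductive LTL (P : Type) : Type
  | atom : P → LTL P
  | not : LTL P → LTL P
  | or : LTL P → LTL P → LTL P
  | and : LTL P → LTL P → LTL P
  | next : LTL P → LTL P
  | fut : LTL P → LTL P
  | glob : LTL P → LTL P
  | untl : LTL P → LTL P → LTL P

/-- Satisfaction of an `LTL` formula on a finite word over `2^P`
(a list of sets of propositions). -/
def satFin {P : Type} : LTL P → List (Set P) → Prop
  | .atom p, w => p ∈ w.getD 0 ∅
  | .not φ, w => ¬ satFin φ w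
  | .or φ ψ, w => satFin φ w ∨ satFin ψ w
  | .and φ ψ, w => satFin φ w ∧ satFin ψ w
  | .next φ, w => 2 ≤ w.length ∧ satFin φ w.tail
  | .fut φ, w => ∃ j < w.length, satFin φ (w.drop j)
  | .glob φ, w => ∀ j < w.length, satFin φ (w.drop j)
  | .untl φ ψ, w => ∃ j < w.length, satFin ψ (w.drop j) ∧ ∀ k < j, satFin φ (w.drop k)

/-- Satisfaction of an `LTL` formula on an infinite word over `2^P`. -/
def satInf {P : Type} : LTL P → (ℕ → Set P) → Prop
  | .atom p, w => p ∈ w 0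
  | .not φ, w => ¬ satInf φ w
  | .or φ ψ, w => satInf φ w ∨ satInf ψ w
  | .and φ ψ, w => satInf φ w ∧ satInf ψ w
  | .next φ, w => satInf φ (fun i => w (i + 1))
  | .fut φ, w => ∃ j, satInf φ (fun i => w (i + j))
  | .glob φ, w => ∀ j, satInf φ (fun i => w (i + j))
  | .untl φ ψ, w => ∃ j, satInf ψ (fun i => w (i + j)) ∧ ∀ k < j, satInf φ (fun i => w (i + k))

/-- A model of `W(Prop)`: either a non-empty finite word `u` (when `v = []`) or
the ultimately periodic infinite word `u·v^ω` (when `v ≠ []`). -/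
structure UPWord (P : Type) where
  u : List (Set P)
  v : List (Set P)
  ne : u ≠ [] ∨ v ≠ []

namespace UPWord

variable {P : Type}

/-- The letter of the infinite word `u·v^ω` at position `i`. -/
def letter (w : UPWord P) (i : ℕ) : Set P :=
  if i < w.u.length then w.u.getD i ∅
  else w.v.getD ((i - w.u.length) % w.v.length) ∅

/-- Satisfaction of an `LTL` formula on a word of `W(Prop)`. -/
def sat (w : UPWord P) (φ : LTL P) : Prop :=
  if w.v = [] then satFin φ w.u else satInf φ w.letter

/-- `‖w‖`, the size of (the representation of) a word of `W(Prop)`. -/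
def norm (w : UPWord P) : ℕ := w.u.length + w.v.length

end UPWord

/-- A fragment of `LTL(Prop)`: a subset of the operators
(atomic propositions, `¬`, `∨`, `∧`, `X`, `F`, `G`, `U`). -/
structure LTLFragment (P : Type) where
  atoms : Set P
  hasNot : Prop
  hasOr : Prop
  hasAnd : Prop
  hasNext : Prop
  hasFut : Prop
  hasGlob : Prop
  hasUntil : Prop

/-- A formula belongs to the fragment if it is built using only its operators. -/
def LTLFragment.Mem {P : Type} (F : LTLFragment P) : LTL P → Prop
  | .atom p => p ∈ F.atoms
  | .not φ => F.hasNot ∧ F.Mem φ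
  | .or φ ψ => F.hasOr ∧ F.Mem φ ∧ F.Mem ψ
  | .and φ ψ => F.hasAnd ∧ F.Mem φ ∧ F.Mem ψ
  | .next φ => F.hasNext ∧ F.Mem φ
  | .fut φ => F.hasFut ∧ F.Mem φ
  | .glob φ => F.hasGlob ∧ F.Mem φ
  | .untl φ ψ => F.hasUntil ∧ F.Mem φ ∧ F.Mem ψ

/-- The set of subformulas of an `LTL` formula. -/
def LTLSub {P : Type} : LTL P → Set (LTL P)
  | .atom p => {.atom p}
  | .not φ => insert (.not φ) (LTLSub φ)
  | .or φ ψ => insert (.or φ ψ) (LTLSub φ ∪ LTLSub ψ)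
  | .and φ ψ => insert (.and φ ψ) (LTLSub φ ∪ LTLSub ψ)
  | .next φ => insert (.next φ) (LTLSub φ)
  | .fut φ => insert (.fut φ) (LTLSub φ)
  | .glob φ => insert (.glob φ) (LTLSub φ)
  | .untl φ ψ => insert (.untl φ ψ) (LTLSub φ ∪ LTLSub ψ)

/-- The (syntax-DAG) size of an `LTL` formula: its number of distinct subformulas. -/
noncomputable def LTLsz {P : Type} (φ : LTL P) : ℕ := (LTLSub φ).ncard

/-!
Take pairwise coprime odd moduli `C`, put `M = ∏ c ∈ C, c`, and compare the infinite word
`P = (∅ Prop)^ω` with the words `N_c = (∅ Prop^(c-1))^ω`. The positions carrying `Prop` in `P` and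
`∅` in every `N_c` are exactly those `≡ M [MOD 2M]`, so `X^M p` separates `P` from the `N_c`.
Conversely, if a formula built from atoms, `∨`, `X`, `F`, `G` separates them at position `x`, then
one of the positions `x, …, x + d` is `≡ M [MOD 2M]`, where `d` is its `X`-depth. As long as
`d + 2 ≤ M`, no subformula `F φ` or `G φ` can separate: `φ` would separate at two positions `M + 1`
apart (`P` has period `2`), respectively `M` apart (Chinese remaindering for the `N_c`), and two
windows of width `d` at such a distance cannot both meet the residue `M`. Hence a separating formula
has `X`-depth at least `M - 1` and at least `M` subformulas. The fragment with `∧` instead of `∨`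
is reduced to this one by swapping `∨/∧`, `F/G` and complementing every letter.

For the moduli `p ^ ⌊log_p x⌋` (`p` an odd prime, `p ≤ x`) we get
`2 ^ ⌊log₂ x⌋ * M = lcm (1, …, x) ≥ 2 ^ x / (x + 1)`, while the total size of the sample is at most
`2 + x² / 2`; with `x = 4s` this gives `M ≥ 2 ^ (3s) ≥ 2 ^ √k`.
-/

namespace LTL

variable {P : Type}

def nextDepth : LTL P → ℕ
  | .atom _ => 0
  | .not φ | .fut φ | .glob φ => nextDepth φ
  | .or φ ψ | .and φ ψ | .untl φ ψ => max (nextDepth φ) (nextDepth ψ)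
  | .next φ => nextDepth φ + 1

theorem finite_LTLSub : ∀ φ : LTL P, (LTLSub φ).Finite
  | .atom _ => Set.finite_singleton _
  | .not φ | .next φ | .fut φ | .glob φ => (finite_LTLSub φ).insert _
  | .or φ ψ | .and φ ψ | .untl φ ψ => ((finite_LTLSub φ).union (finite_LTLSub ψ)).insert _

theorem nextDepth_le_of_mem_LTLSub : ∀ {φ ψ : LTL P}, ψ ∈ LTLSub φ → nextDepth ψ ≤ nextDepth φ
  | .atom _, _, h => by rw [h]
  | .not φ, _, h | .next φ, _, h | .fut φ, _, h | .glob φ, _, h => by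
      rcases h with rfl | h
      · exact le_rfl
      · exact (nextDepth_le_of_mem_LTLSub h).trans (by simp [nextDepth])
  | .or φ χ, _, h | .and φ χ, _, h | .untl φ χ, _, h => by
      rcases h with rfl | h | h
      · exact le_rfl
      · exact (nextDepth_le_of_mem_LTLSub h).trans (by simp [nextDepth])
      · exact (nextDepth_le_of_mem_LTLSub h).trans (by simp [nextDepth])

theorem LTLsz_le_of_subset {φ ψ : LTL P} (h : LTLSub ψ ⊆ LTLSub φ) : LTLsz ψ ≤ LTLsz φ :=
  Set.ncard_le_ncard h (finite_LTLSub φ)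

theorem nextDepth_lt_LTLsz : ∀ φ : LTL P, nextDepth φ < LTLsz φ
  | .atom _ => by simp [nextDepth, LTLsz, LTLSub]
  | .next φ => by
      have hφ : LTL.next φ ∉ LTLSub φ := fun h => by
        simpa [nextDepth] using nextDepth_le_of_mem_LTLSub h
      have := nextDepth_lt_LTLsz φ
      rw [LTLsz, LTLSub, Set.ncard_insert_of_notMem hφ (finite_LTLSub φ)]
      exact Nat.succ_lt_succ this
  | .not φ | .fut φ | .glob φ =>
      (nextDepth_lt_LTLsz φ).trans_le (LTLsz_le_of_subset (Set.subset_insert _ _))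
  | .or φ ψ | .and φ ψ | .untl φ ψ =>
      max_lt
        ((nextDepth_lt_LTLsz φ).trans_le <| LTLsz_le_of_subset <|
          Set.subset_union_left.trans (Set.subset_insert _ _))
        ((nextDepth_lt_LTLsz ψ).trans_le <| LTLsz_le_of_subset <|
          Set.subset_union_right.trans (Set.subset_insert _ _))

def shift {α : Type} (w : ℕ → α) (k : ℕ) : ℕ → α := fun i => w (i + k)

def pulse {α : Type} (c : ℕ) (a b : α) : ℕ → α := fun i => if i % c = 0 then a else b

theorem shift_shift {α : Type} (w : ℕ → α) (k l : ℕ) : shift (shift w k) l = shift w (k + l) := by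
  funext i
  simp only [shift, Nat.add_right_comm, Nat.add_assoc]

theorem shift_pulse_congr {α : Type} {c k l : ℕ} (a b : α) (h : k ≡ l [MOD c]) :
    shift (pulse c a b) k = shift (pulse c a b) l := by
  funext i
  have hi : (i + k) % c = (i + l) % c := h.add_left i
  simp only [shift, pulse, hi]

theorem pulse_compl (c : ℕ) (A B : Set P) : (fun i => (pulse c A B i)ᶜ) = pulse c Aᶜ Bᶜ := by
  funext i
  simp only [pulse]
  split_ifs <;> rfl

theorem satInf_next_shift (φ : LTL P) (w : ℕ → Set P) (k : ℕ) :
    satInf (.next φ) (shift w k) ↔ satInf φ (shift w (k + 1)) := by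
  rw [← shift_shift]; rfl

theorem satInf_fut_shift (φ : LTL P) (w : ℕ → Set P) (k : ℕ) :
    satInf (.fut φ) (shift w k) ↔ ∃ j, satInf φ (shift w (k + j)) := by
  simp only [← shift_shift]; rfl

theorem satInf_glob_shift (φ : LTL P) (w : ℕ → Set P) (k : ℕ) :
    satInf (.glob φ) (shift w k) ↔ ∀ j, satInf φ (shift w (k + j)) := by
  simp only [← shift_shift]; rfl

theorem satInf_iterate_next_atom (p : P) (w : ℕ → Set P) (n : ℕ) :
    satInf (LTL.next^[n] (.atom p)) w ↔ p ∈ w n := by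
  induction n generalizing w with
  | zero => rfl
  | succ n ih => rw [Function.iterate_succ_apply', satInf, ih]

theorem mem_pulse_empty_univ {c i : ℕ} {p : P} :
    p ∈ pulse c (∅ : Set P) Set.univ i ↔ ¬i % c = 0 := by
  unfold pulse; split_ifs <;> simp_all

/-- Swaps `∨`/`∧` and `F`/`G`. `U` has no dual in this syntax, so `dual` is only meaningful on
`U`-free formulas. -/
def dual : LTL P → LTL P
  | .atom p => .atom p
  | .not φ => .not (dual φ)
  | .or φ ψ => .and (dual φ) (dual ψ)
  | .and φ ψ => .or (dual φ) (dual ψ)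
  | .next φ => .next (dual φ)
  | .fut φ => .glob (dual φ)
  | .glob φ => .fut (dual φ)
  | .untl φ ψ => .untl (dual φ) (dual ψ)

theorem nextDepth_dual : ∀ φ : LTL P, nextDepth (dual φ) = nextDepth φ
  | .atom _ => rfl
  | .not φ | .fut φ | .glob φ => nextDepth_dual φ
  | .next φ => congrArg (· + 1) (nextDepth_dual φ)
  | .or φ ψ | .and φ ψ | .untl φ ψ =>
      congrArg₂ max (nextDepth_dual φ) (nextDepth_dual ψ)

end LTL

namespace LTLFragment

variable {P : Type}

theorem mem_iterate_next {F : LTLFragment P} (h : F.hasNext) {φ : LTL P} (hφ : F.Mem φ) (n : ℕ) :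
    F.Mem (LTL.next^[n] φ) := by
  induction n with
  | zero => exact hφ
  | succ n ih => rw [Function.iterate_succ_apply']; exact ⟨h, ih⟩

def dual (F : LTLFragment P) : LTLFragment P :=
  { F with hasOr := F.hasAnd, hasAnd := F.hasOr, hasFut := F.hasGlob, hasGlob := F.hasFut }

theorem mem_dual {F : LTLFragment P} : ∀ {φ : LTL P}, F.Mem φ → F.dual.Mem φ.dual
  | .atom _, h => h
  | .not _, h | .next _, h | .fut _, h | .glob _, h => ⟨h.1, mem_dual h.2⟩
  | .or _ _, h | .and _ _, h | .untl _ _, h => ⟨h.1, mem_dual h.2.1, mem_dual h.2.2⟩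

theorem satInf_dual {F : LTLFragment P} (hU : ¬F.hasUntil) :
    ∀ {φ : LTL P}, F.Mem φ → ∀ w : ℕ → Set P,
      satInf φ.dual w ↔ ¬satInf φ (fun i => (w i)ᶜ)
  | .atom _, _, w => by simp [LTL.dual, satInf]
  | .not _, h, w => by simp only [LTL.dual, satInf, satInf_dual hU h.2]
  | .or _ _, h, w | .and _ _, h, w => by
      simp only [LTL.dual, satInf, satInf_dual hU h.2.1, satInf_dual hU h.2.2]; tauto
  | .next _, h, w => satInf_dual hU h.2 _
  | .fut _, h, w => by simp only [LTL.dual, satInf, satInf_dual hU h.2, not_exists]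
  | .glob _, h, w => by simp only [LTL.dual, satInf, satInf_dual hU h.2, not_forall]
  | .untl _ _, h, _ => absurd h.1 hU

end LTLFragment

theorem Finset.odd_prod {ι : Type} {s : Finset ι} {f : ι → ℕ} (h : ∀ i ∈ s, Odd (f i)) :
    Odd (∏ i ∈ s, f i) :=
  Finset.prod_induction _ Odd (fun _ _ => Odd.mul) odd_one h

theorem Nat.modEq_two_mul_of_odd_of_dvd {M x : ℕ} (hx : Odd x) (h : M ∣ x) :
    x ≡ M [MOD 2 * M] := by
  obtain ⟨t, rfl⟩ := h
  obtain ⟨u, rfl⟩ := (Nat.odd_mul.1 hx).2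
  have : M * (2 * u + 1) = M + 2 * M * u := by ring
  rw [this, Nat.ModEq, Nat.add_mul_mod_self_left]

theorem Nat.not_modEq_of_modEq_of_lt {M d e₁ e₂ k y : ℕ} (hk : d < k) (hkM : k + d < 2 * M)
    (he₁ : e₁ ≤ d) (he₂ : e₂ ≤ d) (h₁ : y + e₁ ≡ M [MOD 2 * M]) :
    ¬y + k + e₂ ≡ M [MOD 2 * M] := fun h₂ => by
  have h₂' : y + (k + e₂) ≡ M [MOD 2 * M] := by rwa [← add_assoc]
  have h : e₁ ≡ k + e₂ [MOD 2 * M] := Nat.ModEq.add_left_cancel' y (h₁.trans h₂'.symm)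
  have := h.eq_of_lt_of_lt (by omega) (by omega)
  omega

namespace LTL

variable {P : Type}

def SeparatesAt (C : Finset ℕ) (φ : LTL P) (x : ℕ) : Prop :=
  satInf φ (shift (pulse 2 ∅ Set.univ) x) ∧ ∀ c ∈ C, ¬satInf φ (shift (pulse c ∅ Set.univ) x)

variable {C : Finset ℕ} {M d x : ℕ} {φ : LTL P}

theorem not_separatesAt_fut (hM : Odd M) (hd : d + 2 ≤ M)
    (ih : ∀ y, SeparatesAt C φ y → ∃ e ≤ d, y + e ≡ M [MOD 2 * M]) :
    ¬SeparatesAt C (.fut φ) x := by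
  rintro ⟨hP, hN⟩
  obtain ⟨j, hj⟩ := (satInf_fut_shift _ _ _).1 hP
  have hN' : ∀ c ∈ C, ∀ k, ¬satInf φ (shift (pulse c ∅ Set.univ) (x + k)) :=
    fun c hc k h => hN c hc ((satInf_fut_shift _ _ _).2 ⟨k, h⟩)
  have hperiod : x + j + (M + 1) ≡ x + j + 0 [MOD 2] :=
    (Nat.modEq_zero_iff_dvd.2 (even_iff_two_dvd.1 hM.add_one)).add_left _
  obtain ⟨e₁, he₁, h₁⟩ := ih (x + j) ⟨hj, fun c hc => hN' c hc j⟩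
  obtain ⟨e₂, he₂, h₂⟩ := ih (x + j + (M + 1))
    ⟨by rwa [shift_pulse_congr _ _ hperiod], fun c hc => by rw [add_assoc]; exact hN' c hc _⟩
  exact Nat.not_modEq_of_modEq_of_lt (by omega) (by omega) he₁ he₂ h₁ h₂

theorem not_separatesAt_glob (hodd : ∀ c ∈ C, Odd c) (hcop : (C : Set ℕ).Pairwise Nat.Coprime)
    (hdvd : ∀ c ∈ C, c ∣ M) (hd : d + 2 ≤ M)
    (ih : ∀ y, SeparatesAt C φ y → ∃ e ≤ d, y + e ≡ M [MOD 2 * M]) :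
    ¬SeparatesAt C (.glob φ) x := by
  rintro ⟨hP, hN⟩
  rw [satInf_glob_shift] at hP
  have hN' : ∀ c ∈ C, ∃ j, ¬satInf φ (shift (pulse c ∅ Set.univ) (x + j)) := fun c hc => by
    simpa only [satInf_glob_shift, not_forall] using hN c hc
  choose! j hj using hN'
  obtain ⟨w, hw⟩ := Nat.chineseRemainderOfFinset j id C (fun c hc => (hodd c hc).pos.ne') hcop
  have hN₁ : ∀ c ∈ C, ¬satInf φ (shift (pulse c ∅ Set.univ) (x + w)) := fun c hc => by
    have hwc : w ≡ j c [MOD c] := hw c hc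
    rw [shift_pulse_congr _ _ (hwc.add_left x)]; exact hj c hc
  have hN₂ : ∀ c ∈ C, ¬satInf φ (shift (pulse c ∅ Set.univ) (x + w + M)) := fun c hc => by
    rw [shift_pulse_congr _ _ ((Nat.modEq_zero_iff_dvd.2 (hdvd c hc)).add_left (x + w))]
    exact hN₁ c hc
  obtain ⟨e₁, he₁, h₁⟩ := ih (x + w) ⟨hP w, hN₁⟩
  obtain ⟨e₂, he₂, h₂⟩ := ih (x + w + M) ⟨by rw [add_assoc]; exact hP _, hN₂⟩
  exact Nat.not_modEq_of_modEq_of_lt (by omega) (by omega) he₁ he₂ h₁ h₂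

theorem exists_modEq_of_separatesAt {F : LTLFragment P} (hnot : ¬F.hasNot) (hand : ¬F.hasAnd)
    (huntil : ¬F.hasUntil) (hodd : ∀ c ∈ C, Odd c) (hcop : (C : Set ℕ).Pairwise Nat.Coprime) :
    ∀ {φ : LTL P}, F.Mem φ → φ.nextDepth + 2 ≤ ∏ c ∈ C, c → ∀ {x : ℕ}, SeparatesAt C φ x →
      ∃ e ≤ φ.nextDepth, x + e ≡ ∏ c ∈ C, c [MOD 2 * ∏ c ∈ C, c]
  | .atom _, _, _, x, ⟨hP, hN⟩ => by
      refine ⟨0, le_rfl, Nat.modEq_two_mul_of_odd_of_dvd ?_ ?_⟩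
      · simpa [satInf, shift, mem_pulse_empty_univ, Nat.odd_iff] using hP
      · rw [← Finset.lcm_eq_prod hcop]
        refine Finset.lcm_dvd fun c hc => Nat.dvd_of_mod_eq_zero ?_
        simpa [satInf, shift, mem_pulse_empty_univ] using hN c hc
  | .not _, h, _, _, _ => absurd h.1 hnot
  | .and _ _, h, _, _, _ => absurd h.1 hand
  | .untl _ _, h, _, _, _ => absurd h.1 huntil
  | .or φ ψ, h, hd, x, ⟨hP, hN⟩ => by
      rcases hP with hP | hP
      · obtain ⟨e, he, hx⟩ := exists_modEq_of_separatesAt hnot hand huntil hodd hcop h.2.1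
          (le_trans (by simp [nextDepth]) hd) ⟨hP, fun c hc hφ => hN c hc (.inl hφ)⟩
        exact ⟨e, he.trans (le_max_left _ _), hx⟩
      · obtain ⟨e, he, hx⟩ := exists_modEq_of_separatesAt hnot hand huntil hodd hcop h.2.2
          (le_trans (by simp [nextDepth]) hd) ⟨hP, fun c hc hψ => hN c hc (.inr hψ)⟩
        exact ⟨e, he.trans (le_max_right _ _), hx⟩
  | .next φ, h, hd, x, ⟨hP, hN⟩ => by
      obtain ⟨e, he, hx⟩ := exists_modEq_of_separatesAt hnot hand huntil hodd hcop h.2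
        (by simp only [nextDepth] at hd; omega)
        ⟨(satInf_next_shift _ _ _).1 hP, fun c hc hφ => hN c hc ((satInf_next_shift _ _ _).2 hφ)⟩
      exact ⟨e + 1, Nat.succ_le_succ he, by rwa [add_comm e, ← add_assoc]⟩
  | .fut φ, h, hd, _, hsep =>
      absurd hsep <| not_separatesAt_fut (Finset.odd_prod hodd) hd
        fun _ => exists_modEq_of_separatesAt hnot hand huntil hodd hcop h.2 hd
  | .glob φ, h, hd, _, hsep =>
      absurd hsep <| not_separatesAt_glob hodd hcop (fun _ => Finset.dvd_prod_of_mem id) hd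
        fun _ => exists_modEq_of_separatesAt hnot hand huntil hodd hcop h.2 hd

theorem prod_le_nextDepth_add_one {F : LTLFragment P} (hnot : ¬F.hasNot) (hand : ¬F.hasAnd)
    (huntil : ¬F.hasUntil) (hodd : ∀ c ∈ C, Odd c) (hcop : (C : Set ℕ).Pairwise Nat.Coprime)
    {φ : LTL P} (hφ : F.Mem φ) (hP : satInf φ (pulse 2 ∅ Set.univ))
    (hN : ∀ c ∈ C, ¬satInf φ (pulse c ∅ Set.univ)) :
    ∏ c ∈ C, c ≤ φ.nextDepth + 1 := by
  by_contra! hlt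
  obtain ⟨e, he, h⟩ :=
    exists_modEq_of_separatesAt hnot hand huntil hodd hcop hφ hlt (x := 0) ⟨hP, hN⟩
  rw [zero_add] at h
  have := h.eq_of_lt_of_lt (by omega) (by omega)
  omega

end LTL

namespace UPWord

variable {P : Type}

def pulse (c : ℕ) (A B : Set P) : UPWord P :=
  ⟨[], A :: List.replicate (c - 1) B, Or.inr (List.cons_ne_nil _ _)⟩

noncomputable def pulses (C : Finset ℕ) (A B : Set P) : Finset (UPWord P) :=
  C.image fun c => pulse c A B

variable {c : ℕ} {A B : Set P}

theorem pulse_v_ne_nil : (pulse c A B).v ≠ [] := List.cons_ne_nil _ _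

theorem norm_pulse (hc : 0 < c) : (pulse c A B).norm = c := by
  simp [norm, pulse]; omega

theorem letter_pulse (hc : 0 < c) : (pulse c A B).letter = LTL.pulse c A B := by
  funext i
  have hlen : (pulse c A B).v.length = c := by simp [pulse]; omega
  simp only [letter, pulse, List.length_nil, Nat.not_lt_zero, if_false, Nat.sub_zero] at hlen ⊢
  rw [hlen, LTL.pulse]
  rcases h : i % c with _ | k
  · rfl
  · have : k < c - 1 := by have := Nat.mod_lt i hc; omega
    simp [List.getD_eq_getElem?_getD, this]

theorem sat_pulse (hc : 0 < c) (φ : LTL P) :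
    (pulse c A B).sat φ ↔ satInf φ (LTL.pulse c A B) := by
  rw [sat, if_neg pulse_v_ne_nil, letter_pulse hc]

theorem sum_norm_pulses {C : Finset ℕ} (hodd : ∀ c ∈ C, Odd c) (A B : Set P) :
    ∑ w ∈ {pulse 2 A B} ∪ pulses C A B, w.norm = 2 + ∑ c ∈ C, c := by
  have hpos : ∀ c ∈ C, 0 < c := fun c hc => (hodd c hc).pos
  have hinj : Set.InjOn (fun c => pulse c A B) C := fun c hc c' hc' h => by
    simpa [norm_pulse (hpos c hc), norm_pulse (hpos c' hc')] using congrArg norm h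
  have hdisj : Disjoint {pulse 2 A B} (pulses C A B) := by
    simp only [Finset.disjoint_singleton_left, pulses, Finset.mem_image, not_exists, not_and]
    intro c hc h
    have := congrArg norm h
    rw [norm_pulse (hpos c hc), norm_pulse two_pos] at this
    exact Nat.not_even_iff_odd.2 (hodd c hc) (this ▸ even_two)
  rw [Finset.sum_union hdisj, Finset.sum_singleton, norm_pulse two_pos, pulses,
    Finset.sum_image hinj]
  exact congrArg _ (Finset.sum_congr rfl fun c hc => norm_pulse (hpos c hc))

end UPWord

namespace LTL

variable {P : Type} {C : Finset ℕ}

def Separates (φ : LTL P) (Pos Neg : Finset (UPWord P)) : Prop :=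
  (∀ w ∈ Pos, w.sat φ) ∧ ∀ w ∈ Neg, ¬w.sat φ

theorem sat_pulse_iterate_next_atom {c : ℕ} (hc : 0 < c) {A B : Set P} (p : P) (n : ℕ) :
    (UPWord.pulse c A B).sat (next^[n] (atom p)) ↔ p ∈ if n % c = 0 then A else B := by
  rw [UPWord.sat_pulse hc, satInf_iterate_next_atom]; rfl

theorem separates_or_iterate_next (hodd : ∀ c ∈ C, Odd c) (p : P) :
    (next^[∏ c ∈ C, c] (atom p)).Separates {UPWord.pulse 2 ∅ Set.univ}
      (UPWord.pulses C ∅ Set.univ) := by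
  simp only [Separates, Finset.mem_singleton, forall_eq, UPWord.pulses, Finset.forall_mem_image]
  refine ⟨?_, fun c hc => ?_⟩
  · simp [sat_pulse_iterate_next_atom two_pos, Nat.odd_iff.1 (Finset.odd_prod hodd)]
  · simp [sat_pulse_iterate_next_atom (hodd c hc).pos,
      Nat.mod_eq_zero_of_dvd (Finset.dvd_prod_of_mem (fun c => c) hc)]

theorem separates_and_iterate_next (hodd : ∀ c ∈ C, Odd c) (p : P) :
    (next^[∏ c ∈ C, c] (atom p)).Separates (UPWord.pulses C Set.univ ∅)
      {UPWord.pulse 2 Set.univ ∅} := by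
  simp only [Separates, Finset.mem_singleton, forall_eq, UPWord.pulses, Finset.forall_mem_image]
  refine ⟨fun c hc => ?_, ?_⟩
  · simp [sat_pulse_iterate_next_atom (hodd c hc).pos,
      Nat.mod_eq_zero_of_dvd (Finset.dvd_prod_of_mem (fun c => c) hc)]
  · simp [sat_pulse_iterate_next_atom two_pos, Nat.odd_iff.1 (Finset.odd_prod hodd)]

theorem prod_le_LTLsz_of_separates_or {F : LTLFragment P} (hnot : ¬F.hasNot) (hand : ¬F.hasAnd)
    (huntil : ¬F.hasUntil) (hodd : ∀ c ∈ C, Odd c) (hcop : (C : Set ℕ).Pairwise Nat.Coprime)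
    {φ : LTL P} (hφ : F.Mem φ)
    (hsep : φ.Separates {UPWord.pulse 2 ∅ Set.univ} (UPWord.pulses C ∅ Set.univ)) :
    ∏ c ∈ C, c ≤ LTLsz φ := by
  refine (prod_le_nextDepth_add_one hnot hand huntil hodd hcop hφ ?_ fun c hc h => ?_).trans
    (nextDepth_lt_LTLsz φ)
  · exact (UPWord.sat_pulse two_pos φ).1 (hsep.1 _ (Finset.mem_singleton_self _))
  · exact hsep.2 _ (Finset.mem_image_of_mem _ hc) ((UPWord.sat_pulse (hodd c hc).pos φ).2 h)

theorem prod_le_LTLsz_of_separates_and {F : LTLFragment P} (hnot : ¬F.hasNot) (hor : ¬F.hasOr)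
    (huntil : ¬F.hasUntil) (hodd : ∀ c ∈ C, Odd c) (hcop : (C : Set ℕ).Pairwise Nat.Coprime)
    {φ : LTL P} (hφ : F.Mem φ)
    (hsep : φ.Separates (UPWord.pulses C Set.univ ∅) {UPWord.pulse 2 Set.univ ∅}) :
    ∏ c ∈ C, c ≤ LTLsz φ := by
  have hdual := F.satInf_dual huntil hφ
  have h := prod_le_nextDepth_add_one (F := F.dual) hnot hor huntil hodd hcop (F.mem_dual hφ)
    ?_ fun c hc => ?_
  · exact (nextDepth_dual φ ▸ h).trans (nextDepth_lt_LTLsz φ)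
  · rw [hdual, pulse_compl, Set.compl_empty, Set.compl_univ, ← UPWord.sat_pulse two_pos]
    exact hsep.2 _ (Finset.mem_singleton_self _)
  · rw [hdual, pulse_compl, Set.compl_empty, Set.compl_univ, not_not,
      ← UPWord.sat_pulse (hodd c hc).pos]
    exact hsep.1 _ (Finset.mem_image_of_mem _ hc)

end LTL

open Nat Finset in
theorem Nat.card_primesLE_erase_two_le (x : ℕ) : #((primesLE x).erase 2) ≤ x / 2 := by
  have hS : ∀ p ∈ (primesLE x).erase 2, p % 2 = 1 ∧ 2 ≤ p ∧ p ≤ x := fun p hp => by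
    obtain ⟨hp2, hp⟩ := mem_erase.1 hp
    obtain ⟨hpx, hp⟩ := mem_primesLE.1 hp
    exact ⟨odd_iff.1 (hp.odd_of_ne_two hp2), hp.two_le, hpx⟩
  calc #((primesLE x).erase 2) ≤ #(Icc 1 (x / 2)) :=
        card_le_card_of_injOn (· / 2)
          (fun p hp => by have := hS p hp; simp only [coe_Icc, Set.mem_Icc]; omega)
          (fun p hp q hq h => by have := hS p hp; have := hS q hq; simp only at h; omega)
    _ = x / 2 := by simp

open Nat Finset in
theorem Nat.two_pow_le_mul_prod_pow_log {x : ℕ} (hx : 2 ≤ x) :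
    2 ^ x ≤ (x + 1) * x * ∏ p ∈ (primesLE x).erase 2, p ^ p.log x :=
  calc 2 ^ x ≤ (x + 1) * lcmUpto x := Chebyshev.two_pow_le_mul_lcmUpto x
    _ = (x + 1) * (2 ^ Nat.log 2 x * ∏ p ∈ (primesLE x).erase 2, p ^ p.log x) := by
      rw [lcmUpto_eq_prod_pow_log, ← mul_prod_erase _ _ (mem_primesLE.2 ⟨hx, prime_two⟩)]
    _ ≤ (x + 1) * (x * ∏ p ∈ (primesLE x).erase 2, p ^ p.log x) := by
      gcongr; exact pow_log_le_self 2 (by omega)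
    _ = _ := by ring

theorem Nat.four_mul_add_one_mul_four_mul_le_two_pow {s : ℕ} (hs : 11 ≤ s) :
    (4 * s + 1) * (4 * s) ≤ 2 ^ s := by
  induction s, hs using Nat.le_induction with
  | base => norm_num
  | succ s hs ih => rw [pow_succ]; nlinarith

theorem Finset.prod_le_two_pow_sum {ι : Type} (s : Finset ι) (f : ι → ℕ) :
    ∏ i ∈ s, f i ≤ 2 ^ ∑ i ∈ s, f i := by
  rw [← Finset.prod_pow_eq_pow_sum]
  exact Finset.prod_le_prod' fun i _ => Nat.lt_two_pow_self.le

theorem Real.two_rpow_sqrt_le {K a M : ℕ} (hK : K ≤ a ^ 2) (hM : 2 ^ a ≤ M) :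
    (2 : ℝ) ^ √(K : ℝ) ≤ M := by
  have ha : √(K : ℝ) ≤ a := Real.sqrt_le_iff.2 ⟨by positivity, by exact_mod_cast hK⟩
  calc (2 : ℝ) ^ √(K : ℝ) ≤ (2 : ℝ) ^ (a : ℝ) := Real.rpow_le_rpow_of_exponent_le one_le_two ha
    _ = ((2 ^ a : ℕ) : ℝ) := by rw [Real.rpow_natCast]; push_cast; rfl
    _ ≤ M := by exact_mod_cast hM

open Nat Finset in
theorem exists_odd_pairwise_coprime_two_rpow_sqrt_le (n : ℕ) :
    ∃ C : Finset ℕ, (∀ c ∈ C, Odd c) ∧ (C : Set ℕ).Pairwise Nat.Coprime ∧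
      n ≤ 2 + ∑ c ∈ C, c ∧ (2 : ℝ) ^ √((2 + ∑ c ∈ C, c : ℕ) : ℝ) ≤ ((∏ c ∈ C, c : ℕ) : ℝ) := by
  set s := max n 11
  set S := (primesLE (4 * s)).erase 2
  have hS : ∀ p ∈ S, p.Prime ∧ p ≠ 2 ∧ p ≤ 4 * s := fun p hp => by
    obtain ⟨hp2, hp⟩ := mem_erase.1 hp
    exact ⟨prime_of_mem_primesLE hp, hp2, le_of_mem_primesLE hp⟩
  have hinj : Set.InjOn (fun p : ℕ => p ^ p.log (4 * s)) S := fun p hp q hq h =>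
    have hlog : ∀ r ∈ S, r.log (4 * s) ≠ 0 := fun r hr =>
      (log_pos (hS r hr).1.one_lt (hS r hr).2.2).ne'
    ((hS p hp).1.pow_inj' (hS q hq).1 (hlog p hp) (hlog q hq) h).1
  refine ⟨S.image fun p : ℕ => p ^ p.log (4 * s), ?_, ?_, ?_⟩
  · simp only [forall_mem_image]
    exact fun p hp => ((hS p hp).1.odd_of_ne_two (hS p hp).2.1).pow
  · simp only [coe_image]
    rintro _ ⟨p, hp, rfl⟩ _ ⟨q, hq, rfl⟩ hpq
    exact Nat.Coprime.pow _ _ ((coprime_primes (hS p hp).1 (hS q hq).1).2 fun h => hpq (h ▸ rfl))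
  rw [sum_image hinj, prod_image hinj]
  set M := ∏ p ∈ S, p ^ p.log (4 * s)
  have hM : 2 ^ (3 * s) ≤ M := by
    have h := (Nat.two_pow_le_mul_prod_pow_log (x := 4 * s) (by omega)).trans
      (Nat.mul_le_mul_right M (Nat.four_mul_add_one_mul_four_mul_le_two_pow (le_max_right n 11)))
    rw [show 4 * s = s + 3 * s by ring, pow_add] at h
    exact Nat.le_of_mul_le_mul_left h (by positivity)
  have hsum : ∑ p ∈ S, p ^ p.log (4 * s) ≤ 8 * s ^ 2 :=
    calc ∑ p ∈ S, p ^ p.log (4 * s) ≤ #S * (4 * s) := by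
          simpa using sum_le_card_nsmul S _ _ fun p _ => pow_log_le_self p (by omega)
      _ ≤ (4 * s / 2) * (4 * s) := Nat.mul_le_mul_right _ (Nat.card_primesLE_erase_two_le _)
      _ = 8 * s ^ 2 := by rw [show 4 * s / 2 = 2 * s by omega]; ring
  refine ⟨?_, Real.two_rpow_sqrt_le (a := 3 * s) ?_ hM⟩
  · have := (Nat.pow_le_pow_iff_right one_lt_two).1 (hM.trans (prod_le_two_pow_sum _ _))
    omega
  · have hs : 11 ≤ s := le_max_right n 11
    nlinarith

/-- **Proposition (lower bound for LTL).** Let `Prop = {p, p̄}` (the type `Bool`).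
For every monotone fragment `F` of `LTL(Prop)` with `X ∈ Op'`, `U ∉ Op'`, and at
least one atomic proposition: for every `n` there is a sample of ultimately
periodic words of total size `k ≥ n` that is separable by a fragment formula, and
such that every separating fragment formula has size at least `2^√k`. -/
theorem ltl_lower_bound (F : LTLFragment Bool)
    (hmonoNot : ¬ F.hasNot) (hmonoOrAnd : ¬ F.hasOr ∨ ¬ F.hasAnd)
    (hnext : F.hasNext) (huntil : ¬ F.hasUntil)
    (hatom : F.atoms.Nonempty) :
    ∀ n : ℕ, ∃ Pos Neg : Finset (UPWord Bool),
      (∀ w ∈ Pos ∪ Neg, w.v ≠ []) ∧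
      n ≤ ∑ w ∈ Pos ∪ Neg, w.norm ∧
      (∃ φ : LTL Bool, F.Mem φ ∧
          (∀ w ∈ Pos, w.sat φ) ∧ (∀ w ∈ Neg, ¬ w.sat φ)) ∧
      (∀ φ : LTL Bool, F.Mem φ →
          (∀ w ∈ Pos, w.sat φ) → (∀ w ∈ Neg, ¬ w.sat φ) →
          (2 : ℝ) ^ Real.sqrt ((∑ w ∈ Pos ∪ Neg, w.norm : ℕ) : ℝ) ≤ (LTLsz φ : ℝ)) := by
  intro n
  obtain ⟨C, hodd, hcop, hn, hbound⟩ := exists_odd_pairwise_coprime_two_rpow_sqrt_le n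
  obtain ⟨p, hp⟩ := hatom
  have hXp : F.Mem (LTL.next^[∏ c ∈ C, c] (.atom p)) :=
    F.mem_iterate_next hnext (φ := .atom p) hp _
  have hv (A B : Set Bool) : ∀ w ∈ {UPWord.pulse 2 A B} ∪ UPWord.pulses C A B, w.v ≠ [] := by
    simp [UPWord.pulses, UPWord.pulse_v_ne_nil]
  by_cases hand : F.hasAnd
  · have hor : ¬F.hasOr := hmonoOrAnd.resolve_right (not_not.2 hand)
    refine ⟨UPWord.pulses C Set.univ ∅, {UPWord.pulse 2 Set.univ ∅}, ?_⟩
    rw [Finset.union_comm, UPWord.sum_norm_pulses hodd]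
    exact ⟨hv _ _, hn, ⟨_, hXp, LTL.separates_and_iterate_next hodd p⟩, fun φ hφ hpos hneg =>
      hbound.trans <| by exact_mod_cast
        LTL.prod_le_LTLsz_of_separates_and hmonoNot hor huntil hodd hcop hφ ⟨hpos, hneg⟩⟩
  · refine ⟨{UPWord.pulse 2 ∅ Set.univ}, UPWord.pulses C ∅ Set.univ, ?_⟩
    rw [UPWord.sum_norm_pulses hodd]
    exact ⟨hv _ _, hn, ⟨_, hXp, LTL.separates_or_iterate_next hodd p⟩, fun φ hφ hpos hneg =>
      hbound.trans <| by exact_mod_cast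
        LTL.prod_le_LTLsz_of_separates_or hmonoNot hand huntil hodd hcop hφ ⟨hpos, hneg⟩⟩
end

section
/- Let Prop := {p}, Act := {a,b,c,d,e}, Op_[] := {[α] : α ∈ Act} and Op_⟨⟩ := {⟨α⟩^{≥1} : α ∈ Act}. Let L' be a monotone fragment of ML(Prop,Act) containing the atomic proposition p and such that: ⟨α⟩^{≥k} ∉ Op' for every k ≥ 2 and α ∈ Act; Op_[] ⊆ Op' or Op_⟨⟩ ⊆ Op'; if ∧ ∈ Op' then Op_[] ⊆ Op'; and if ∨ ∈ Op' then Op_⟨⟩ ⊆ Op'. Then for every n ∈ ℕ there exists a sample S = (𝒫,𝒩) of Kripke structures over (Prop, Act) with k := Σ_{K ∈ 𝒫∪𝒩} |Q_K| ≥ n such that some L'-formula is S-separating and every S-separating L'-formula has size at least 2^{k/25}. -/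
open scoped Classical

/-- Formulas of modal logic `ML(Prop, Act)`:
`φ ::= p | ¬φ | φ∨φ | φ∧φ | ⟨a⟩^{≥k}φ (k ≥ 1) | [a]φ`. -/
inductive MLFormula (P A : Type) : Type
  | atom : P → MLFormula P A
  | not : MLFormula P A → MLFormula P A
  | or : MLFormula P A → MLFormula P A → MLFormula P A
  | and : MLFormula P A → MLFormula P A → MLFormula P A
  | dia : A → ℕ+ → MLFormula P A → MLFormula P A
  | box : A → MLFormula P A → MLFormula P A

/-- A Kripke structure over `(P, A)`: a finite non-empty set of states, a
non-empty set of initial states, transitions labelled by actions, and a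
labelling of states by propositions. -/
structure Kripke (P A : Type) where
  Q : Type
  [finQ : Fintype Q]
  neQ : Nonempty Q
  I : Set Q
  neI : I.Nonempty
  δ : Q → A → Set Q
  π : Q → Set P

attribute [instance] Kripke.finQ

/-- Satisfaction of a modal formula at a state of a Kripke structure. -/
def MLsat {P A : Type} (K : Kripke P A) : MLFormula P A → K.Q → Prop
  | .atom p, q => p ∈ K.π q
  | .not φ, q => ¬ MLsat K φ q
  | .or φ ψ, q => MLsat K φ q ∨ MLsat K ψ q
  | .and φ ψ, q => MLsat K φ q ∧ MLsat K ψ q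
  | .dia a k φ, q => (k : ℕ) ≤ (K.δ q a ∩ {q' | MLsat K φ q'}).ncard
  | .box a φ, q => ∀ q' ∈ K.δ q a, MLsat K φ q'

/-- `K ⊨ φ`: every initial state satisfies `φ`. -/
def MLsatK {P A : Type} (K : Kripke P A) (φ : MLFormula P A) : Prop :=
  ∀ q ∈ K.I, MLsat K φ q

/-- The semantic value of a formula in `K`: the set of states satisfying it. -/
def semK {P A : Type} (K : Kripke P A) (φ : MLFormula P A) : Set K.Q :=
  {q | MLsat K φ q}

/-- A fragment of `ML(Prop, Act)`: a subset of the operators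
(atomic propositions `p`, `¬`, `∨`, `∧`, `⟨a⟩^{≥k}`, `[a]`). -/
structure MLFragment (P A : Type) where
  atoms : Set P
  hasNot : Prop
  hasOr : Prop
  hasAnd : Prop
  dias : Set (A × ℕ+)
  boxes : Set A

/-- A formula belongs to the fragment if it is built using only its operators. -/
def MLFragment.Mem {P A : Type} (F : MLFragment P A) : MLFormula P A → Prop
  | .atom p => p ∈ F.atoms
  | .not φ => F.hasNot ∧ F.Mem φ
  | .or φ ψ => F.hasOr ∧ F.Mem φ ∧ F.Mem ψ
  | .and φ ψ => F.hasAnd ∧ F.Mem φ ∧ F.Mem ψ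
  | .dia a k φ => (a, k) ∈ F.dias ∧ F.Mem φ
  | .box a φ => a ∈ F.boxes ∧ F.Mem φ

/-- The set of subformulas of a modal formula. -/
def MLSub {P A : Type} : MLFormula P A → Set (MLFormula P A)
  | .atom p => {.atom p}
  | .not φ => insert (.not φ) (MLSub φ)
  | .or φ ψ => insert (.or φ ψ) (MLSub φ ∪ MLSub ψ)
  | .and φ ψ => insert (.and φ ψ) (MLSub φ ∪ MLSub ψ)
  | .dia a k φ => insert (.dia a k φ) (MLSub φ)
  | .box a φ => insert (.box a φ) (MLSub φ)

/-- The (syntax-DAG) size of a modal formula: its number of distinct subformulas. -/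
noncomputable def MLsz {P A : Type} (φ : MLFormula P A) : ℕ := (MLSub φ).ncard

/-!
In `Kripke.loopTop` a state without propositions may stay put or escape to a state where every
proposition holds. A negation-free, disjunction-free formula with threshold-one diamonds can fail
there only along a chain of conjunctions and boxes ending in some `[w₀]⋯[wₙ₋₁] p`; then it has more
than `n` subformulas, and it implies `[w₀]⋯[wₙ₋₁] p`. On the positive side we put the universal
automaton of an `m`-bit binary counter, with `O(m)` states: a word all of whose runs accept must
spell the blocks `0, 1, …, 2 ^ m - 1`, so it has length at least `2 ^ m`. Complementing the labels
and exchanging `∧`/`∨` and boxes/diamonds transfers the bound to the fragments with `∨`.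
-/

namespace Kripke

variable {P A : Type}

def toNFA (K : Kripke P A) (p : P) : NFA A K.Q where
  step := K.δ
  start := K.I
  accept := {q | p ∈ K.π q}

/-- `false` satisfies no proposition and may stay or move to `true`, where every proposition
holds and which it never leaves. -/
def loopTop (P A : Type) : Kripke P A where
  Q := Bool
  neQ := inferInstance
  I := {false}
  neI := Set.singleton_nonempty _
  δ q _ := Set.Ici q
  π q := {_p | q}

def compl (K : Kripke P A) : Kripke P A :=
  { K with π := fun q => (K.π q)ᶜ }

theorem card_compl (K : Kripke P A) : Fintype.card K.compl.Q = Fintype.card K.Q :=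
  rfl

end Kripke

namespace MLFormula

variable {P A : Type}

def boxes (w : List A) (p : P) : MLFormula P A := w.foldr box (atom p)

def dias (w : List A) (p : P) : MLFormula P A := w.foldr (fun a φ => dia a 1 φ) (atom p)

def dual : MLFormula P A → MLFormula P A
  | atom p => atom p
  | not φ => not (dual φ)
  | or φ ψ => and (dual φ) (dual ψ)
  | and φ ψ => or (dual φ) (dual ψ)
  | dia a _ φ => box a (dual φ)
  | box a φ => dia a 1 (dual φ)

theorem dual_dias (w : List A) (p : P) : (dias w p).dual = boxes w p := by
  induction w with
  | nil => rfl
  | cons a w ih => exact congrArg (box a) ih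

end MLFormula

namespace MLFragment

variable {P A : Type}

def positive (P A : Type) (hasOr hasAnd : Prop) : MLFragment P A where
  atoms := Set.univ
  hasNot := False
  hasOr := hasOr
  hasAnd := hasAnd
  dias := {x | x.2 = 1}
  boxes := Set.univ

theorem Mem.mono {F G : MLFragment P A} {φ : MLFormula P A} (h : F.Mem φ)
    (hatoms : F.atoms ⊆ G.atoms) (hnot : F.hasNot → G.hasNot) (hor : F.hasOr → G.hasOr)
    (hand : F.hasAnd → G.hasAnd) (hdias : F.dias ⊆ G.dias) (hboxes : F.boxes ⊆ G.boxes) :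
    G.Mem φ := by
  induction φ with
  | atom p => exact hatoms h
  | not φ ih => exact ⟨hnot h.1, ih h.2⟩
  | or φ ψ ihφ ihψ => exact ⟨hor h.1, ihφ h.2.1, ihψ h.2.2⟩
  | and φ ψ ihφ ihψ => exact ⟨hand h.1, ihφ h.2.1, ihψ h.2.2⟩
  | dia a k φ ih => exact ⟨hdias h.1, ih h.2⟩
  | box a φ ih => exact ⟨hboxes h.1, ih h.2⟩

theorem Mem.mem_positive {F : MLFragment P A} {φ : MLFormula P A} (h : F.Mem φ) {o a : Prop}
    (hnot : ¬ F.hasNot) (hor : F.hasOr → o) (hand : F.hasAnd → a)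
    (hdias : ∀ b (k : ℕ+), 2 ≤ (k : ℕ) → (b, k) ∉ F.dias) : (positive P A o a).Mem φ := by
  refine h.mono (Set.subset_univ _) (fun h => hnot h) hor hand (fun x hx => ?_) (Set.subset_univ _)
  by_contra hx1
  exact hdias x.1 x.2 (by have := PNat.coe_eq_one_iff.not.2 hx1; have := x.2.pos; omega) hx

theorem Mem.dual {o a : Prop} {φ : MLFormula P A} (h : (positive P A o a).Mem φ) :
    (positive P A a o).Mem φ.dual := by
  induction φ with
  | atom p => trivial
  | not φ ih => exact h.1.elim
  | or φ ψ ihφ ihψ | and φ ψ ihφ ihψ => exact ⟨h.1, ihφ h.2.1, ihψ h.2.2⟩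
  | dia b k φ ih => exact ⟨trivial, ih h.2⟩
  | box b φ ih => exact ⟨rfl, ih h.2⟩

theorem mem_boxes {F : MLFragment P A} {p : P} (hp : p ∈ F.atoms) (hboxes : ∀ a, a ∈ F.boxes)
    (w : List A) : F.Mem (MLFormula.boxes w p) := by
  induction w with
  | nil => exact hp
  | cons a w ih => exact ⟨hboxes a, ih⟩

theorem mem_dias {F : MLFragment P A} {p : P} (hp : p ∈ F.atoms)
    (hdias : ∀ a, (a, 1) ∈ F.dias) (w : List A) : F.Mem (MLFormula.dias w p) := by
  induction w with
  | nil => exact hp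
  | cons a w ih => exact ⟨hdias a, ih⟩

end MLFragment

namespace MLFormula

open MLFragment

variable {P A : Type}

/-! ### Box paths and formula size -/

inductive BoxPath : MLFormula P A → P → List A → Prop
  | atom (p : P) : BoxPath (atom p) p []
  | andLeft {φ ψ : MLFormula P A} {p w} : BoxPath φ p w → BoxPath (and φ ψ) p w
  | andRight {φ ψ : MLFormula P A} {p w} : BoxPath ψ p w → BoxPath (and φ ψ) p w
  | box {a : A} {φ : MLFormula P A} {p w} : BoxPath φ p w → BoxPath (box a φ) p (a :: w)

theorem MLSub_finite (φ : MLFormula P A) : (MLSub φ).Finite := by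
  induction φ with
  | atom p => exact Set.finite_singleton _
  | not φ ih | dia a k φ ih | box a φ ih => exact ih.insert _
  | or φ ψ ihφ ihψ | and φ ψ ihφ ihψ => exact (ihφ.union ihψ).insert _

theorem sizeOf_le_of_mem_MLSub {φ ψ : MLFormula P A} (h : ψ ∈ MLSub φ) :
    sizeOf ψ ≤ sizeOf φ := by
  induction φ with
  | atom p => rw [Set.mem_singleton_iff.1 h]
  | not φ ih | dia a k φ ih | box a φ ih =>
    rcases h with rfl | h
    · rfl
    · have := ih h
      simp only [not.sizeOf_spec, dia.sizeOf_spec, box.sizeOf_spec]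
      omega
  | or φ ψ ihφ ihψ | and φ ψ ihφ ihψ =>
    rcases h with rfl | h | h
    · rfl
    · have := ihφ h
      simp only [or.sizeOf_spec, and.sizeOf_spec]
      omega
    · have := ihψ h
      simp only [or.sizeOf_spec, and.sizeOf_spec]
      omega

theorem MLsz_box (a : A) (φ : MLFormula P A) : MLsz (box a φ) = MLsz φ + 1 := by
  have h : box a φ ∉ MLSub φ := fun h => by
    have := sizeOf_le_of_mem_MLSub h
    simp only [box.sizeOf_spec] at this
    omega
  exact Set.ncard_insert_of_notMem h (MLSub_finite φ)

theorem MLsz_le_MLsz_and_left (φ ψ : MLFormula P A) : MLsz φ ≤ MLsz (and φ ψ) :=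
  Set.ncard_le_ncard (fun _ h => Or.inr (Or.inl h)) (MLSub_finite _)

theorem MLsz_le_MLsz_and_right (φ ψ : MLFormula P A) : MLsz ψ ≤ MLsz (and φ ψ) :=
  Set.ncard_le_ncard (fun _ h => Or.inr (Or.inr h)) (MLSub_finite _)

theorem BoxPath.length_lt_MLsz {φ : MLFormula P A} {p : P} {w : List A} (h : BoxPath φ p w) :
    w.length < MLsz φ := by
  induction h with
  | atom p => simp [MLsz, MLSub]
  | @andLeft φ ψ _ _ _ ih => exact ih.trans_le (MLsz_le_MLsz_and_left φ ψ)
  | @andRight φ ψ _ _ _ ih => exact ih.trans_le (MLsz_le_MLsz_and_right φ ψ)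
  | @box a φ _ _ _ ih => simpa [MLsz_box] using ih

theorem MLSub_dual (φ : MLFormula P A) : MLSub φ.dual = dual '' MLSub φ := by
  induction φ with
  | atom p => simp [MLSub, dual]
  | not φ ih | dia a k φ ih | box a φ ih =>
    simp only [dual, MLSub, ih, Set.image_insert_eq]
  | or φ ψ ihφ ihψ | and φ ψ ihφ ihψ =>
    simp only [dual, MLSub, ihφ, ihψ, Set.image_insert_eq, Set.image_union]

theorem MLsz_dual_le (φ : MLFormula P A) : MLsz φ.dual ≤ MLsz φ := by
  rw [MLsz, MLSub_dual]
  exact Set.ncard_image_le (MLSub_finite φ)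

/-! ### Semantics -/

variable {K : Kripke P A}

theorem BoxPath.MLsat_boxes {φ : MLFormula P A} {p : P} {w : List A} (h : BoxPath φ p w)
    {q : K.Q} (hq : MLsat K φ q) : MLsat K (boxes w p) q := by
  induction h generalizing q with
  | atom p => exact hq
  | andLeft _ ih => exact ih hq.1
  | andRight _ ih => exact ih hq.2
  | box _ ih => exact fun q' hq' => ih (hq q' hq')

variable (K) in
theorem MLsat_dia_one {a : A} {φ : MLFormula P A} {q : K.Q} :
    MLsat K (dia a 1 φ) q ↔ ∃ q' ∈ K.δ q a, MLsat K φ q' := by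
  simp only [MLsat, PNat.one_coe, Nat.one_le_iff_ne_zero, ne_eq,
    Set.ncard_eq_zero (Set.toFinite _), ← Set.nonempty_iff_ne_empty]
  rfl

theorem MLsat_boxes_iff {w : List A} {p : P} {q : K.Q} :
    MLsat K (boxes w p) q ↔ (K.toNFA p).evalFrom {q} w ⊆ (K.toNFA p).accept := by
  induction w generalizing q with
  | nil => simp [boxes, MLsat, Kripke.toNFA]
  | cons a w ih =>
    rw [NFA.evalFrom_cons, NFA.stepSet_singleton, NFA.evalFrom_eq_biUnion_singleton,
      Set.iUnion₂_subset_iff]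
    exact forall₂_congr fun q' _ => ih

theorem MLsatK_boxes_iff {w : List A} {p : P} :
    MLsatK K (boxes w p) ↔ (K.toNFA p).evalFrom K.I w ⊆ (K.toNFA p).accept := by
  rw [NFA.evalFrom_eq_biUnion_singleton, Set.iUnion₂_subset_iff]
  exact forall₂_congr fun _ _ => MLsat_boxes_iff

theorem MLsat_compl_iff {o a : Prop} {φ : MLFormula P A} (h : (positive P A o a).Mem φ)
    (q : K.Q) : MLsat K.compl φ q ↔ ¬ MLsat K φ.dual q := by
  induction φ generalizing q with
  | atom p => rfl
  | not φ ih => exact h.1.elim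
  | or φ ψ ihφ ihψ => simp only [MLsat, dual, ihφ h.2.1, ihψ h.2.2, not_and_or]
  | and φ ψ ihφ ihψ => simp only [MLsat, dual, ihφ h.2.1, ihψ h.2.2, not_or]
  | dia b k φ ih =>
    obtain ⟨rfl, h⟩ := h
    refine (MLsat_dia_one K.compl).trans ?_
    simp only [dual, MLsat, not_forall, exists_prop]
    exact exists_congr fun q' => and_congr_right fun _ => ih h q'
  | box b φ ih =>
    refine Iff.trans ?_ (not_congr (MLsat_dia_one K)).symm
    simp only [not_exists, not_and]
    exact forall₂_congr fun q' _ => ih h.2 q'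

theorem MLsatK_compl_iff {o a : Prop} {φ : MLFormula P A} (h : (positive P A o a).Mem φ)
    (hI : K.I.Subsingleton) : MLsatK K.compl φ ↔ ¬ MLsatK K φ.dual := by
  obtain ⟨q₀, hq₀⟩ := K.neI
  have hall {R : K.Q → Prop} : (∀ q ∈ K.I, R q) ↔ R q₀ :=
    ⟨fun hR => hR q₀ hq₀, fun hR q hq => hI hq₀ hq ▸ hR⟩
  exact hall.trans ((MLsat_compl_iff h q₀).trans (not_congr hall.symm))

/-! ### The structure `loopTop` -/

theorem MLsat_loopTop_true {o a : Prop} {φ : MLFormula P A} (h : (positive P A o a).Mem φ) :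
    MLsat (Kripke.loopTop P A) φ true := by
  induction φ with
  | atom p => trivial
  | not φ ih => exact h.1.elim
  | or φ ψ ihφ ihψ => exact Or.inl (ihφ h.2.1)
  | and φ ψ ihφ ihψ => exact ⟨ihφ h.2.1, ihψ h.2.2⟩
  | dia b k φ ih =>
    obtain ⟨rfl, h⟩ := h
    exact (MLsat_dia_one _).2 ⟨true, le_refl true, ih h⟩
  | box b φ ih =>
    rintro (_ | _) hq
    · exact absurd (hq : true ≤ false) (by decide : ¬ true ≤ false)
    · exact ih h.2

theorem not_MLsat_loopTop_false_boxes (w : List A) (p : P) :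
    ¬ MLsat (Kripke.loopTop P A) (boxes w p) false := by
  induction w with
  | nil => exact Bool.false_ne_true
  | cons a w ih => exact fun h => ih (h false (le_refl false))

theorem not_MLsatK_loopTop_boxes (w : List A) (p : P) :
    ¬ MLsatK (Kripke.loopTop P A) (boxes w p) :=
  fun h => not_MLsat_loopTop_false_boxes w p (h false rfl)

theorem exists_boxPath_of_not_MLsat_loopTop {φ : MLFormula P A}
    (h : (positive P A False True).Mem φ) (hφ : ¬ MLsat (Kripke.loopTop P A) φ false) :
    ∃ p w, BoxPath φ p w := by
  induction φ with
  | atom p => exact ⟨p, [], .atom p⟩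
  | not φ ih | or φ _ ih _ => exact h.1.elim
  | and φ ψ ihφ ihψ =>
    rcases not_and_or.1 hφ with hφ | hψ
    · obtain ⟨p, w, hw⟩ := ihφ h.2.1 hφ
      exact ⟨p, w, hw.andLeft⟩
    · obtain ⟨p, w, hw⟩ := ihψ h.2.2 hψ
      exact ⟨p, w, hw.andRight⟩
  | dia b k φ ih =>
    obtain ⟨rfl, h⟩ := h
    exact (hφ ((MLsat_dia_one _).2 ⟨true, Bool.false_le true, MLsat_loopTop_true h⟩)).elim
  | box b φ ih =>
    have hfalse : ¬ MLsat (Kripke.loopTop P A) φ false := by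
      intro hf
      apply hφ
      rintro (_ | _) _
      · exact hf
      · exact MLsat_loopTop_true h.2
    obtain ⟨p, w, hw⟩ := ih h.2 hfalse
    exact ⟨p, b :: w, hw.box⟩

theorem exists_boxes_of_separates {φ : MLFormula P A} (h : (positive P A False True).Mem φ)
    (hK : MLsatK K φ) (hloop : ¬ MLsatK (Kripke.loopTop P A) φ) :
    ∃ p w, MLsatK K (boxes w p) ∧ w.length < MLsz φ := by
  have hfalse : ¬ MLsat (Kripke.loopTop P A) φ false := fun hf =>
    hloop fun q hq => by rwa [Set.mem_singleton_iff.1 hq]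
  obtain ⟨p, w, hw⟩ := exists_boxPath_of_not_MLsat_loopTop h hfalse
  exact ⟨p, w, fun q hq => hw.MLsat_boxes (hK q hq), hw.length_lt_MLsz⟩

end MLFormula

/-! ### Universal automata as Kripke structures -/

namespace NFA

variable {A σ : Type}

/-- The language of `M` read as a universal automaton. -/
def univAccepts (M : NFA A σ) : Language A := {w | M.evalFrom M.start w ⊆ M.accept}

@[simp]
theorem mem_univAccepts {M : NFA A σ} {w : List A} :
    w ∈ M.univAccepts ↔ M.evalFrom M.start w ⊆ M.accept :=
  Iff.rfl

theorem evalFrom_mono (M : NFA A σ) {S T : Set σ} (h : S ⊆ T) (w : List A) :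
    M.evalFrom S w ⊆ M.evalFrom T w := by
  rw [← Set.union_eq_right.2 h, evalFrom_union]
  exact Set.subset_union_left

/-- The fresh unlabelled root `none` replaces the start states, so that there is a single initial
state, as complementation (`MLFormula.MLsatK_compl_iff`) requires. -/
abbrev toKripke [Fintype σ] (M : NFA A σ) : Kripke Unit A where
  Q := Option σ
  neQ := ⟨none⟩
  I := {none}
  neI := Set.singleton_nonempty _
  δ
    | none, a => some '' M.stepSet M.start a
    | some q, a => some '' M.step q a
  π
    | none => ∅
    | some q => {_u | q ∈ M.accept}

variable [Fintype σ] (M : NFA A σ)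

theorem toKripke_card : Fintype.card M.toKripke.Q = Fintype.card σ + 1 :=
  Fintype.card_option

theorem toKripke_evalFrom_image_some (S : Set σ) (w : List A) :
    (M.toKripke.toNFA ()).evalFrom (some '' S) w = some '' M.evalFrom S w := by
  induction w generalizing S with
  | nil => rfl
  | cons a w ih =>
    rw [evalFrom_cons, evalFrom_cons, ← ih]
    congr 1
    ext q
    simp only [mem_stepSet, Set.mem_image]
    constructor
    · rintro ⟨_, ⟨s, hs, rfl⟩, q', hq', rfl⟩
      exact ⟨q', ⟨s, hs, hq'⟩, rfl⟩
    · rintro ⟨q', ⟨s, hs, hq'⟩, rfl⟩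
      exact ⟨some s, ⟨s, hs, rfl⟩, q', hq', rfl⟩

theorem MLsatK_toKripke_boxes_iff (w : List A) :
    MLsatK M.toKripke (MLFormula.boxes w ()) ↔ w ≠ [] ∧ w ∈ M.univAccepts := by
  rw [MLFormula.MLsatK_boxes_iff]
  cases w with
  | nil => simp [Kripke.toNFA]
  | cons a w =>
    have hroot : (M.toKripke.toNFA ()).stepSet M.toKripke.I a = some '' M.stepSet M.start a :=
      stepSet_singleton _ _ _
    rw [evalFrom_cons, hroot, toKripke_evalFrom_image_some, mem_univAccepts, evalFrom_cons,
      Set.image_subset_iff]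
    simp [Kripke.toNFA, Set.preimage]

end NFA

/-! ### Binary counting -/

def bitsOf : ℕ → ℕ → List Bool
  | 0, _ => []
  | m + 1, u => decide (u % 2 = 1) :: bitsOf m (u / 2)

def addCarry : Bool → List Bool → List Bool
  | _, [] => []
  | c, b :: bs => xor b c :: addCarry (c && b) bs

@[simp]
theorem length_bitsOf (m u : ℕ) : (bitsOf m u).length = m := by
  induction m generalizing u with
  | zero => rfl
  | succ m ih => simp [bitsOf, ih]

theorem addCarry_bitsOf (c : Bool) (m u : ℕ) :
    addCarry c (bitsOf m u) = bitsOf m (u + c.toNat) := by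
  induction m generalizing c u with
  | zero => rfl
  | succ m ih =>
    have hbit : xor (decide (u % 2 = 1)) c = decide ((u + c.toNat) % 2 = 1) := by
      rcases Nat.mod_two_eq_zero_or_one u with h | h <;> cases c <;> simp [h, Nat.add_mod]
    have hcarry : u / 2 + (c && decide (u % 2 = 1)).toNat = (u + c.toNat) / 2 := by
      rcases Nat.mod_two_eq_zero_or_one u with h | h <;> cases c <;>
        simp only [h, Bool.false_and, Bool.true_and, Bool.toNat_false, Bool.toNat_true,
          zero_ne_one, decide_true, decide_false] <;> omega
    rw [bitsOf, addCarry, ih, hbit, hcarry, bitsOf]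

theorem all_bitsOf {m u : ℕ} (hu : u < 2 ^ m) :
    (bitsOf m u).all id = decide (u + 1 = 2 ^ m) := by
  induction m generalizing u with
  | zero => simp_all [bitsOf]
  | succ m ih =>
    rw [pow_succ] at hu ⊢
    rw [bitsOf, List.all_cons, ih (by omega : u / 2 < 2 ^ m), id, ← Bool.decide_and]
    exact decide_eq_decide.2 (by omega)

/-! ### The counter automaton -/

/-- Letters `0` and `1` are bits, `2` ends a block. -/
def bit (b : Bool) : Fin 5 := if b then 1 else 0

def blk (m u : ℕ) : List (Fin 5) := (bitsOf m u).map bit ++ [2]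

@[simp]
theorem length_blk (m u : ℕ) : (blk m u).length = m + 1 := by
  simp [blk]

def countWord (m : ℕ) : List (Fin 5) := (List.range (2 ^ m)).flatMap (blk m)

/-- Components of a universal automaton checking that the input is a sequence of `m`-bit blocks
counting up by one from `0` and ending with all ones:
* `shape i`: at position `i` of a block; forces the input to consist of blocks of `m` bits.
* `track c`: started at every separator; reads the next block with carry `c`, spawning for each bit
  a `skip` state that expects the corresponding bit of the incremented value one block later, and
  ends in `done c`.
* `done c`: accepting iff `c`, i.e. iff the last block was all ones.
* `skip e j`: the letter `j` positions ahead must be `bit e`.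
* `sink`: rejecting trap. -/
inductive CounterState (m : ℕ) : Type
  | shape : Fin (m + 1) → CounterState m
  | track : Bool → CounterState m
  | done : Bool → CounterState m
  | skip : Bool → Fin (m + 1) → CounterState m
  | sink : CounterState m
  deriving DecidableEq, Fintype

namespace CounterState

variable {m : ℕ}

/-- Natural-number indices are truncated to `m`. -/
def shapeAt (i : ℕ) : CounterState m := shape ⟨min i m, by omega⟩

def skipAt (e : Bool) (j : ℕ) : CounterState m := skip e ⟨min j m, by omega⟩

def step : CounterState m → Fin 5 → Set (CounterState m)
  | shape i, x =>
    if (i : ℕ) < m then (if x = 0 ∨ x = 1 then {shapeAt (i + 1)} else {sink})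
    else if x = 2 then {shape 0, track true} else {sink}
  | track c, x =>
    if x = 2 then {done c}
    else if x = 0 then {track false, skipAt c m}
    else if x = 1 then {track c, skipAt (!c) m}
    else ∅
  | done _, _ => ∅
  | skip e j, x =>
    if (j : ℕ) = 0 then (if x = bit e then ∅ else {sink}) else {skipAt e (j - 1)}
  | sink, _ => {sink}

def Accepting : CounterState m → Prop
  | shape i => (i : ℕ) = 0
  | done c => c = true
  | sink => False
  | _ => True

/-- Checks that the input spells `v` from position `k` on. -/
def pending (k : ℕ) (v : List Bool) : Set (CounterState m) :=
  {q | ∃ i, ∃ hi : i < v.length, q = skipAt v[i] (k + i)}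

/-- The states after a block when the next block must be `blk m u`; `fl` records whether the last
block was all ones. -/
def config (m u : ℕ) (fl : Bool) : Set (CounterState m) :=
  {shape 0, track true, done fl} ∪ pending 0 (bitsOf m u)

end CounterState

open CounterState in
def counterNFA (m : ℕ) : NFA (Fin 5) (CounterState m) where
  step := step
  start := config m 0 false
  accept := {q | q.Accepting}

namespace CounterState

variable {m : ℕ}

def encode : CounterState m → Fin 4 × Bool × Fin (m + 1)
  | shape i => (0, false, i)
  | sink => (0, true, 0)
  | skip e j => (1, e, j)
  | track c => (2, c, 0)
  | done c => (3, c, 0)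

theorem encode_injective : Function.Injective (encode (m := m)) := by
  intro x y h
  cases x <;> cases y <;> simp_all [encode]

theorem card_le (m : ℕ) : Fintype.card (CounterState m) ≤ 8 * (m + 1) := by
  have h := Fintype.card_le_of_injective _ (encode_injective (m := m))
  simp only [Fintype.card_prod, Fintype.card_fin, Fintype.card_bool] at h
  omega

theorem le_card (m : ℕ) : m + 1 ≤ Fintype.card (CounterState m) := by
  simpa using Fintype.card_le_of_injective _ fun _ _ => (shape.inj : shape _ = shape _ → _)

end CounterState

namespace CounterState

variable {m : ℕ}

@[simp]
theorem counterNFA_step (q : CounterState m) (x : Fin 5) : (counterNFA m).step q x = step q x :=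
  rfl

theorem evalFrom_singleton_cons (q : CounterState m) (x : Fin 5) (w : List (Fin 5)) :
    (counterNFA m).evalFrom {q} (x :: w) = (counterNFA m).evalFrom (step q x) w := by
  rw [NFA.evalFrom_cons, NFA.stepSet_singleton, counterNFA_step]

theorem evalFrom_empty (w : List (Fin 5)) : (counterNFA m).evalFrom ∅ w = ∅ := by
  induction w with
  | nil => rfl
  | cons x w ih => rwa [NFA.evalFrom_cons, NFA.stepSet_empty]

theorem evalFrom_sink (w : List (Fin 5)) : (counterNFA m).evalFrom {sink} w = {sink} := by
  induction w with
  | nil => rfl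
  | cons x w ih => rwa [evalFrom_singleton_cons]

theorem evalFrom_shapeAt {i : ℕ} {bs : List Bool} (h : i + bs.length ≤ m) :
    (counterNFA m).evalFrom {shapeAt i} (bs.map bit) = {shapeAt (i + bs.length)} := by
  induction bs generalizing i with
  | nil => rfl
  | cons b bs ih =>
    simp only [List.length_cons] at h
    have hstep : step (shapeAt i : CounterState m) (bit b) = {shapeAt (i + 1)} := by
      cases b <;> simp [step, shapeAt, bit, show i < m by omega, show i ≤ m by omega]
    rw [List.map_cons, evalFrom_singleton_cons, hstep, ih (by omega)]
    simp only [List.length_cons, Nat.add_assoc, Nat.add_comm 1]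

theorem evalFrom_shape_blk (u : ℕ) :
    (counterNFA m).evalFrom {shape 0} (blk m u) = {shape 0, track true} := by
  have h0 : (shape 0 : CounterState m) = shapeAt 0 := rfl
  rw [blk, NFA.evalFrom_append, h0, evalFrom_shapeAt (by simp), length_bitsOf]
  simp [step, shapeAt]

theorem getElem?_blk_of_lt {u i : ℕ} (hi : i < m) :
    (blk m u)[i]? = (bitsOf m u)[i]?.map bit := by
  simp [blk, List.getElem?_append_left, hi]

theorem getElem?_blk_self (u : ℕ) : (blk m u)[m]? = some 2 := by
  simp [blk]

theorem evalFrom_skipAt_add {e : Bool} {j : ℕ} {w : List (Fin 5)} (h : j + w.length ≤ m) :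
    (counterNFA m).evalFrom {skipAt e (j + w.length)} w = {skipAt e j} := by
  induction w generalizing j with
  | nil => rfl
  | cons x w ih =>
    simp only [List.length_cons] at h ⊢
    have hstep : step (skipAt e (j + (w.length + 1)) : CounterState m) x =
        {skipAt e (j + w.length)} := by
      simp [step, skipAt, show j + (w.length + 1) ≤ m by omega]
    rw [evalFrom_singleton_cons, hstep, ih (by omega)]

theorem evalFrom_skipAt_of_getElem? {e : Bool} {j : ℕ} {w : List (Fin 5)} {x : Fin 5}
    (hj : j ≤ m) (hx : w[j]? = some x) :
    (counterNFA m).evalFrom {skipAt e j} w = if x = bit e then ∅ else {sink} := by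
  induction w generalizing j with
  | nil => simp at hx
  | cons y w ih =>
    rw [evalFrom_singleton_cons]
    cases j with
    | zero =>
      obtain rfl : y = x := by simpa using hx
      by_cases hy : y = bit e <;> simp [step, skipAt, hy, evalFrom_empty, evalFrom_sink]
    | succ j =>
      have hstep : step (skipAt e (j + 1) : CounterState m) y = {skipAt e j} := by
        simp [step, skipAt, hj]
      rw [hstep, ih (by omega) (by simpa using hx)]

theorem evalFrom_done {c : Bool} {w : List (Fin 5)} (hw : w ≠ []) :
    (counterNFA m).evalFrom {done c} w = ∅ := by
  obtain ⟨x, w, rfl⟩ := List.exists_cons_of_ne_nil hw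
  rw [evalFrom_singleton_cons]
  exact evalFrom_empty w

theorem pending_nil (k : ℕ) : (pending k [] : Set (CounterState m)) = ∅ := by
  simp [pending]

theorem pending_cons (k : ℕ) (e : Bool) (v : List Bool) :
    (pending k (e :: v) : Set (CounterState m)) = insert (skipAt e k) (pending (k + 1) v) := by
  ext q
  simp only [pending, Set.mem_ofPred_eq, Set.mem_insert_iff, List.length_cons]
  constructor
  · rintro ⟨_ | i, hi, rfl⟩
    · exact Or.inl rfl
    · exact Or.inr ⟨i, by omega, by simp [Nat.add_right_comm, Nat.add_assoc]⟩
  · rintro (rfl | ⟨i, hi, rfl⟩)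
    · exact ⟨0, by omega, rfl⟩
    · exact ⟨i + 1, by omega, by simp [Nat.add_right_comm, Nat.add_assoc]⟩

theorem step_track_bit (c b : Bool) :
    step (track c : CounterState m) (bit b) = {track (c && b), skipAt (xor b c) m} := by
  cases b <;> cases c <;> simp [step, bit]

theorem evalFrom_track {c : Bool} {bs : List Bool} (h : bs.length ≤ m) :
    (counterNFA m).evalFrom {track c} (bs.map bit ++ [2]) =
      insert (done (c && bs.all id)) (pending (m - bs.length) (addCarry c bs)) := by
  induction bs generalizing c with
  | nil => simp [step, addCarry, pending_nil]
  | cons b bs ih =>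
    simp only [List.length_cons] at h
    have hskip := evalFrom_skipAt_add (m := m) (e := xor b c) (j := m - (bs.length + 1))
      (w := bs.map bit ++ [(2 : Fin 5)])
      (by simp only [List.length_append, List.length_map, List.length_singleton]; omega)
    simp only [List.length_append, List.length_map, List.length_singleton,
      show m - (bs.length + 1) + (bs.length + 1) = m by omega] at hskip
    rw [List.map_cons, List.cons_append, evalFrom_singleton_cons, step_track_bit,
      Set.insert_eq, NFA.evalFrom_union, ih (by omega), hskip, addCarry, pending_cons,
      List.length_cons, show m - (bs.length + 1) + 1 = m - bs.length by omega]
    ext q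
    simp only [Bool.and_assoc, Set.union_singleton, Set.mem_insert_iff, List.all_cons, id_eq]
    tauto

theorem evalFrom_pending_blk (u : ℕ) :
    (counterNFA m).evalFrom (pending 0 (bitsOf m u)) (blk m u) = ∅ := by
  rw [NFA.evalFrom_eq_biUnion_singleton]
  simp only [Set.iUnion_eq_empty]
  rintro _ ⟨i, hi, rfl⟩
  have him : i < m := by simpa using hi
  rw [Nat.zero_add, evalFrom_skipAt_of_getElem? him.le
    (by rw [getElem?_blk_of_lt him, List.getElem?_eq_getElem hi]; rfl), if_pos rfl]

theorem evalFrom_config_blk (u : ℕ) (fl : Bool) :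
    (counterNFA m).evalFrom (config m u fl) (blk m u) =
      config m (u + 1) ((bitsOf m u).all id) := by
  have htrack := evalFrom_track (m := m) (c := true) (bs := bitsOf m u) (by simp)
  rw [← blk, length_bitsOf, Nat.sub_self, addCarry_bitsOf, Bool.true_and] at htrack
  simp only [config, Set.insert_eq, NFA.evalFrom_union, evalFrom_shape_blk, htrack,
    evalFrom_done (show blk m u ≠ [] by simp [blk]), evalFrom_pending_blk]
  ext q
  simp only [Set.union_singleton, Set.singleton_union, Set.union_empty, Set.union_insert,
    Set.mem_insert_iff, Set.mem_union, Set.mem_singleton_iff]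
  tauto

theorem config_subset_accept (u : ℕ) : config m u true ⊆ (counterNFA m).accept := by
  rintro q ((rfl | rfl | rfl) | ⟨i, hi, rfl⟩) <;> simp [counterNFA, Accepting, skipAt]

theorem evalFrom_config_blocks (u d : ℕ) (fl : Bool) :
    (counterNFA m).evalFrom (config m u fl) ((List.range' u (d + 1)).flatMap (blk m)) =
      config m (u + d + 1) ((bitsOf m (u + d)).all id) := by
  induction d generalizing u fl with
  | zero => simp [evalFrom_config_blk]
  | succ d ih =>
    rw [List.range'_succ, List.flatMap_cons, NFA.evalFrom_append, evalFrom_config_blk, ih]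
    ring_nf

theorem countWord_mem_univAccepts (m : ℕ) : countWord m ∈ (counterNFA m).univAccepts := by
  have hpos := Nat.one_le_two_pow (n := m)
  have h : countWord m = (List.range' 0 (2 ^ m - 1 + 1)).flatMap (blk m) := by
    rw [countWord, List.range_eq_range', Nat.sub_add_cancel hpos]
  rw [NFA.mem_univAccepts, h]
  refine (evalFrom_config_blocks 0 _ false).trans_subset ?_
  rw [all_bitsOf (by omega), decide_eq_true (by omega)]
  exact config_subset_accept _

theorem countWord_ne_nil (m : ℕ) : countWord m ≠ [] := by
  simpa [countWord, blk, List.flatMap_eq_nil_iff] using ⟨0, Nat.two_pow_pos m⟩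

theorem not_evalFrom_sink_subset_accept (w : List (Fin 5)) :
    ¬ (counterNFA m).evalFrom {sink} w ⊆ (counterNFA m).accept := by
  rw [evalFrom_sink, Set.singleton_subset_iff]
  exact id

theorem getElem?_eq_two_of_shapeAt {i : ℕ} (hi : i ≤ m) {w : List (Fin 5)} (hw : w ≠ [])
    (h : (counterNFA m).evalFrom {shapeAt i} w ⊆ (counterNFA m).accept) : w[m - i]? = some 2 := by
  induction w generalizing i with
  | nil => exact absurd rfl hw
  | cons x w ih =>
    rw [evalFrom_singleton_cons] at h
    rcases hi.lt_or_eq with hi | hi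
    · by_cases hx : x = 0 ∨ x = 1
      · have hstep : step (shapeAt i : CounterState m) x = {shapeAt (i + 1)} := by
          simp [step, shapeAt, hi, hi.le, hx]
        rw [hstep] at h
        have hw : w ≠ [] := by
          rintro rfl
          have : (shapeAt (i + 1) : CounterState m).Accepting := h rfl
          simp only [Accepting, shapeAt, min_eq_zero, Nat.add_eq_zero_iff, one_ne_zero, and_false,
            false_or] at this
          omega
        rw [show m - i = m - (i + 1) + 1 by omega, List.getElem?_cons_succ]
        exact ih hi hw h
      · have hstep : step (shapeAt i : CounterState m) x = {sink} := by
          simp [step, shapeAt, hi, hi.le, hx]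
        exact absurd (hstep ▸ h) (not_evalFrom_sink_subset_accept w)
    · by_cases hx : x = 2
      · simp [hi, hx]
      · have hstep : step (shapeAt i : CounterState m) x = {sink} := by
          simp [step, shapeAt, hi, hx]
        exact absurd (hstep ▸ h) (not_evalFrom_sink_subset_accept w)

theorem getElem?_eq_bit_of_skipAt {e : Bool} {j : ℕ} (hj : j ≤ m) {w : List (Fin 5)}
    (hjw : j < w.length) (h : (counterNFA m).evalFrom {skipAt e j} w ⊆ (counterNFA m).accept) :
    w[j]? = some (bit e) := by
  have hx := List.getElem?_eq_getElem hjw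
  rw [evalFrom_skipAt_of_getElem? hj hx] at h
  rw [hx]
  by_contra hne
  rw [if_neg (fun h' => hne (congrArg some h'))] at h
  exact h rfl

theorem blk_prefix_of_config {u : ℕ} {w : List (Fin 5)}
    (h : (counterNFA m).evalFrom (config m u false) w ⊆ (counterNFA m).accept) :
    blk m u <+: w := by
  have hfrom {q : CounterState m} (hq : q ∈ config m u false) :
      (counterNFA m).evalFrom {q} w ⊆ (counterNFA m).accept :=
    (NFA.evalFrom_mono _ (Set.singleton_subset_iff.2 hq) w).trans h
  have hw : w ≠ [] := by
    rintro rfl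
    have : (done false : CounterState m).Accepting := h (Or.inl (by simp) : done false ∈ _)
    exact Bool.false_ne_true this
  have hsep : w[m]? = some 2 :=
    getElem?_eq_two_of_shapeAt (i := 0) (Nat.zero_le m) hw (hfrom (Or.inl (by simp [shapeAt])))
  have hlen : m < w.length := by
    by_contra hlen
    rw [List.getElem?_eq_none (by omega)] at hsep
    cases hsep
  rw [List.prefix_iff_getElem?]
  intro i hi
  rw [← List.getElem?_eq_getElem hi]
  rcases (show i < m ∨ i = m by simp only [length_blk] at hi; omega) with hi | rfl
  · have hv : i < (bitsOf m u).length := by simpa using hi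
    rw [getElem?_blk_of_lt hi, List.getElem?_eq_getElem hv]
    exact getElem?_eq_bit_of_skipAt hi.le (by omega) (hfrom (Or.inr ⟨i, hv, by simp⟩))
  · rw [hsep, getElem?_blk_self]

theorem length_le_of_config {u d : ℕ} (hd : u + d = 2 ^ m) {w : List (Fin 5)}
    (h : (counterNFA m).evalFrom (config m u false) w ⊆ (counterNFA m).accept) :
    d * (m + 1) ≤ w.length := by
  induction d generalizing u w with
  | zero => simp
  | succ d ih =>
    obtain ⟨rest, rfl⟩ := blk_prefix_of_config h
    rw [NFA.evalFrom_append, evalFrom_config_blk, all_bitsOf (by omega)] at h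
    rw [List.length_append, length_blk, Nat.succ_mul, Nat.add_comm]
    rcases d with _ | d
    · simp
    · rw [decide_eq_false (by omega)] at h
      exact Nat.add_le_add_left (ih (by omega) h) _

theorem length_le_of_mem_univAccepts {w : List (Fin 5)} (h : w ∈ (counterNFA m).univAccepts) :
    2 ^ m * (m + 1) ≤ w.length :=
  length_le_of_config (Nat.zero_add _) h

end CounterState

/-! ### The samples -/

open MLFormula MLFragment CounterState

theorem MLsatK_counter_boxes_countWord (m : ℕ) :
    MLsatK (counterNFA m).toKripke (boxes (countWord m) ()) :=
  ((counterNFA m).MLsatK_toKripke_boxes_iff _).2 ⟨countWord_ne_nil m, countWord_mem_univAccepts m⟩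

theorem MLsatK_loopTop_compl_dias (w : List (Fin 5)) :
    MLsatK (Kripke.loopTop Unit (Fin 5)).compl (dias w ()) := by
  rw [MLsatK_compl_iff (mem_dias (F := positive _ _ True False) trivial (fun _ => rfl) w)
    Set.subsingleton_singleton, dual_dias]
  exact not_MLsatK_loopTop_boxes w ()

theorem not_MLsatK_counter_compl_dias_countWord (m : ℕ) :
    ¬ MLsatK (counterNFA m).toKripke.compl (dias (countWord m) ()) := by
  rw [MLsatK_compl_iff (mem_dias (F := positive _ _ True False) trivial (fun _ => rfl) _)
    Set.subsingleton_singleton, dual_dias, not_not]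
  exact MLsatK_counter_boxes_countWord m

theorem two_pow_le_MLsz_of_separates {m : ℕ} {φ : MLFormula Unit (Fin 5)}
    (h : (positive Unit (Fin 5) False True).Mem φ) (hK : MLsatK (counterNFA m).toKripke φ)
    (hloop : ¬ MLsatK (Kripke.loopTop Unit (Fin 5)) φ) : 2 ^ m ≤ MLsz φ := by
  obtain ⟨⟨⟩, w, hw, hlt⟩ := exists_boxes_of_separates h hK hloop
  have hlen := length_le_of_mem_univAccepts (((counterNFA m).MLsatK_toKripke_boxes_iff w).1 hw).2
  nlinarith

theorem two_pow_le_MLsz_of_separates_compl {m : ℕ} {φ : MLFormula Unit (Fin 5)}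
    (h : (positive Unit (Fin 5) True False).Mem φ)
    (hloop : MLsatK (Kripke.loopTop Unit (Fin 5)).compl φ)
    (hK : ¬ MLsatK (counterNFA m).toKripke.compl φ) : 2 ^ m ≤ MLsz φ := by
  rw [MLsatK_compl_iff h Set.subsingleton_singleton] at hloop hK
  exact (two_pow_le_MLsz_of_separates h.dual (not_not.1 hK) hloop).trans (MLsz_dual_le φ)

theorem two_rpow_div_le {k m s : ℕ} (hk : k ≤ 25 * m) (hs : 2 ^ m ≤ s) :
    (2 : ℝ) ^ ((k : ℝ) / 25) ≤ s :=
  calc (2 : ℝ) ^ ((k : ℝ) / 25) ≤ 2 ^ (m : ℝ) :=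
        Real.rpow_le_rpow_of_exponent_le one_le_two (by
          rw [div_le_iff₀ (by norm_num)]; exact_mod_cast (by omega : k ≤ m * 25))
    _ = ((2 ^ m : ℕ) : ℝ) := by norm_cast
    _ ≤ s := by exact_mod_cast hs

theorem exists_sample_of_separates {P A : Type} {F : MLFragment P A} {K L : Kripke P A}
    {n m : ℕ} (hKL : Fintype.card K.Q ≠ Fintype.card L.Q)
    (hn : n ≤ Fintype.card K.Q + Fintype.card L.Q)
    (hm : Fintype.card K.Q + Fintype.card L.Q ≤ 25 * m)
    {ψ : MLFormula P A} (hψ : F.Mem ψ) (hK : MLsatK K ψ) (hL : ¬ MLsatK L ψ)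
    (hsz : ∀ φ, F.Mem φ → MLsatK K φ → ¬ MLsatK L φ → 2 ^ m ≤ MLsz φ) :
    ∃ Pos Neg : Finset (Kripke P A),
      n ≤ ∑ K ∈ Pos ∪ Neg, Fintype.card K.Q ∧
      (∃ φ : MLFormula P A, F.Mem φ ∧ (∀ K ∈ Pos, MLsatK K φ) ∧ (∀ K ∈ Neg, ¬ MLsatK K φ)) ∧
      (∀ φ : MLFormula P A, F.Mem φ →
          (∀ K ∈ Pos, MLsatK K φ) → (∀ K ∈ Neg, ¬ MLsatK K φ) →
          (2 : ℝ) ^ (((∑ K ∈ Pos ∪ Neg, Fintype.card K.Q : ℕ) : ℝ) / 25) ≤ (MLsz φ : ℝ)) := by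
  have hsum : ∑ M ∈ {K} ∪ {L}, Fintype.card M.Q = Fintype.card K.Q + Fintype.card L.Q := by
    rw [← Finset.insert_eq,
      Finset.sum_pair fun h => hKL (congrArg (fun M : Kripke P A => Fintype.card M.Q) h)]
  refine ⟨{K}, {L}, hsum ▸ hn, ⟨ψ, hψ, by simpa using hK, by simpa using hL⟩, ?_⟩
  intro φ hφ hKφ hLφ
  rw [hsum]
  exact two_rpow_div_le hm
    (hsz φ hφ (hKφ K (Finset.mem_singleton_self K)) (hLφ L (Finset.mem_singleton_self L)))

/-- **Proposition (lower bound for modal logic).** Let `Prop = {p}` (the type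
`Unit`) and `Act = {a,b,c,d,e}` (the type `Fin 5`).  For every monotone fragment
`F` of `ML(Prop, Act)` containing `p`, with no `⟨α⟩^{≥k}` for `k ≥ 2`, containing
all boxes or all diamonds, containing all boxes if it has `∧`, and all diamonds if
it has `∨`: for every `n` there is a sample of Kripke structures of total number of
states `k ≥ n` which is separable by a fragment formula, and such that every
separating fragment formula has size at least `2^(k/25)`. -/
theorem ml_lower_bound (F : MLFragment Unit (Fin 5))
    (hmonoNot : ¬ F.hasNot) (hmonoOrAnd : ¬ F.hasOr ∨ ¬ F.hasAnd)
    (hatom : () ∈ F.atoms)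
    (hdia2 : ∀ (α : Fin 5) (k : ℕ+), 2 ≤ (k : ℕ) → (α, k) ∉ F.dias)
    (hboxdia : (∀ α : Fin 5, α ∈ F.boxes) ∨ (∀ α : Fin 5, (α, (1 : ℕ+)) ∈ F.dias))
    (hand : F.hasAnd → ∀ α : Fin 5, α ∈ F.boxes)
    (hor : F.hasOr → ∀ α : Fin 5, (α, (1 : ℕ+)) ∈ F.dias) :
    ∀ n : ℕ, ∃ Pos Neg : Finset (Kripke Unit (Fin 5)),
      n ≤ ∑ K ∈ Pos ∪ Neg, Fintype.card K.Q ∧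
      (∃ φ : MLFormula Unit (Fin 5), F.Mem φ ∧
          (∀ K ∈ Pos, MLsatK K φ) ∧ (∀ K ∈ Neg, ¬ MLsatK K φ)) ∧
      (∀ φ : MLFormula Unit (Fin 5), F.Mem φ →
          (∀ K ∈ Pos, MLsatK K φ) → (∀ K ∈ Neg, ¬ MLsatK K φ) →
          (2 : ℝ) ^ (((∑ K ∈ Pos ∪ Neg, Fintype.card K.Q : ℕ) : ℝ) / 25) ≤
            (MLsz φ : ℝ)) := by
  intro n
  have hcard := (counterNFA (n + 1)).toKripke_card
  have hlow := le_card (n + 1)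
  have hup := card_le (n + 1)
  have hloop : Fintype.card (Kripke.loopTop Unit (Fin 5)).Q = 2 := rfl
  rcases (by tauto : (¬ F.hasOr ∧ ∀ α, α ∈ F.boxes) ∨ (¬ F.hasAnd ∧ ∀ α, (α, 1) ∈ F.dias))
    with ⟨hnor, hboxes⟩ | ⟨hnand, hdia1⟩
  · exact exists_sample_of_separates (K := (counterNFA (n + 1)).toKripke)
      (L := Kripke.loopTop Unit (Fin 5)) (m := n + 1) (by omega) (by omega) (by omega)
      (mem_boxes hatom hboxes _) (MLsatK_counter_boxes_countWord _)
      (not_MLsatK_loopTop_boxes _ _) fun φ hφ =>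
        two_pow_le_MLsz_of_separates (hφ.mem_positive hmonoNot hnor.elim (fun _ => trivial) hdia2)
  · rw [← Kripke.card_compl] at hcard hloop
    exact exists_sample_of_separates (K := (Kripke.loopTop Unit (Fin 5)).compl)
      (L := (counterNFA (n + 1)).toKripke.compl) (m := n + 1) (by omega) (by omega) (by omega)
      (mem_dias hatom hdia1 _) (MLsatK_loopTop_compl_dias _)
      (not_MLsatK_counter_compl_dias_countWord _) fun φ hφ =>
        two_pow_le_MLsz_of_separates_compl
          (hφ.mem_positive hmonoNot (fun _ => trivial) hnand.elim hdia2)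
end

section
/- Let x ≠ y be two propositions, let n ≥ 1, and let p₁ < p₂ < … < p_n be the first n prime numbers. For m ≥ 1 let w_m(x) := ({y}^{m−1}·{x})^ω be the periodic infinite word over 2^{{x,y}} of period m whose letter at position j is {x} if m divides j+1 and {y} otherwise, and let w₄'(x) := {y}·{x}·w₄(x). For j ∈ ℕ set 𝒫_n^j(x) := { w_{p_i}(x)[j:] : 1 ≤ i ≤ n } ∪ { w₄'(x)[j:] } and 𝒩_n^j(x) := { w₄(x)[j:] }. Then: (1) the least k ∈ ℕ such that x ∈ w[0] for every w ∈ 𝒫_n^k(x) and x ∉ w[0] for every w ∈ 𝒩_n^k(x) equals (Π_{i=1}^n p_i) − 1; and (2) for every j ∈ ℕ, if y ∉ w₄(x)[j] then y ∉ w₂(x)[j]. -/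
/-- The periodic infinite word `w_m(x) = ({y}^{m-1}·{x})^ω` over `2^{{x,y}}`:
its letter at position `j` is `{x}` if `m` divides `j+1` and `{y}` otherwise. -/
def wPer {P : Type} (x y : P) (m : ℕ) : ℕ → Set P :=
  fun j => if m ∣ (j + 1) then {x} else {y}

/-- The word `w₄'(x) := {y}·{x}·w₄(x)`. -/
def w4' {P : Type} (x y : P) : ℕ → Set P :=
  fun j => if j = 0 then {y} else if j = 1 then {x} else wPer x y 4 (j - 2)

/-- The suffix `w[j:]` of an infinite word. -/
def wShift {P : Type} (w : ℕ → Set P) (j : ℕ) : ℕ → Set P :=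
  fun i => w (i + j)

/-- The `i`-th prime number (`nthPrime 1 = 2`, `nthPrime 2 = 3`, …). -/
noncomputable def nthPrime (i : ℕ) : ℕ := Nat.nth Nat.Prime (i - 1)

/-- The set `𝒫_n^j(x) = { w_{p_i}(x)[j:] : 1 ≤ i ≤ n } ∪ { w₄'(x)[j:] }`. -/
def posWords {P : Type} (x y : P) (n j : ℕ) : Set (ℕ → Set P) :=
  {w | ∃ i ∈ Finset.Icc 1 n, w = wShift (wPer x y (nthPrime i)) j} ∪ {wShift (w4' x y) j}

/-- The set `𝒩_n^j(x) = { w₄(x)[j:] }`. -/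
def negWords {P : Type} (x y : P) (j : ℕ) : Set (ℕ → Set P) :=
  {wShift (wPer x y 4) j}

lemma x_mem_wPer {P : Type} {x y : P} (hxy : x ≠ y) (m j : ℕ) :
    x ∈ wPer x y m j ↔ m ∣ (j + 1) := by
  unfold wPer; split <;> simp_all

lemma y_not_mem_wPer {P : Type} {x y : P} (hxy : x ≠ y) (m j : ℕ) :
    y ∉ wPer x y m j ↔ m ∣ (j + 1) := by
  unfold wPer; split <;> simp_all [Ne.symm hxy]

lemma nthPrime_prime (i : ℕ) : Nat.Prime (nthPrime i) := Nat.prime_nth_prime (i - 1)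

lemma nthPrime_one : nthPrime 1 = 2 := by
  have h := Nat.nth_count Nat.prime_two
  have h0 : Nat.count Nat.Prime 2 = 0 := by decide
  rw [h0] at h
  exact h

lemma nthPrime_lt {i j : ℕ} (hi : 1 ≤ i) (hij : i < j) : nthPrime i < nthPrime j := by
  unfold nthPrime
  exact (Nat.nth_lt_nth Nat.infinite_setOf_prime).2 (by omega)

/-- **Lemma.** (1) The least `k` such that `x` occurs in the first letter of every
word of `𝒫_n^k(x)` and does not occur in the first letter of any word of
`𝒩_n^k(x)` is `(Π_{i=1}^n p_i) - 1`; (2) for all `j`, if `y ∉ w₄(x)[j]` then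
`y ∉ w₂(x)[j]`. -/
theorem lower_bound_sample_works (P : Type) (x y : P) (hxy : x ≠ y)
    (n : ℕ) (hn : 1 ≤ n) :
    IsLeast {k : ℕ |
        (∀ w ∈ posWords x y n k, x ∈ w 0) ∧ (∀ w ∈ negWords x y k, x ∉ w 0)}
      ((∏ i ∈ Finset.Icc 1 n, nthPrime i) - 1) ∧
    (∀ j : ℕ, y ∉ wPer x y 4 j → y ∉ wPer x y 2 j) := by
  set Q := ∏ i ∈ Finset.Icc 1 n, nthPrime i with hQdef
  have hdvdQ : ∀ i ∈ Finset.Icc 1 n, nthPrime i ∣ Q :=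
    fun i hi => Finset.dvd_prod_of_mem _ hi
  -- Structure of Q
  have hQform : Q = 2 ∨ ∃ t, Q = 2 * (2 * t + 1) ∧ 1 ≤ t := by
    rcases eq_or_lt_of_le hn with h1 | h2n
    · left
      rw [hQdef, ← h1]
      simp [nthPrime_one]
    · right
      have hsplit : Finset.Icc 1 n = insert 1 (Finset.Icc 2 n) := by
        ext a; simp only [Finset.mem_Icc, Finset.mem_insert]; omega
      have hQM : Q = 2 * ∏ i ∈ Finset.Icc 2 n, nthPrime i := by
        rw [hQdef, hsplit, Finset.prod_insert (by simp), nthPrime_one]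
      set M := ∏ i ∈ Finset.Icc 2 n, nthPrime i with hM
      have hModd : Odd M := by
        refine Finset.prod_induction _ Odd (fun a b => Odd.mul) odd_one ?_
        intro i hi
        simp only [Finset.mem_Icc] at hi
        have h2lt : 2 < nthPrime i := by
          have := nthPrime_lt (le_refl 1) (show 1 < i by omega)
          rwa [nthPrime_one] at this
        exact (nthPrime_prime i).odd_of_ne_two (by omega)
      have hM3 : 3 ≤ M := by
        have h1le : nthPrime 2 ≤ M :=
          Finset.single_le_prod' (fun i _ => (nthPrime_prime i).one_lt.le.trans' (by norm_num))
            (by simp [Finset.mem_Icc]; omega)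
        have : 2 < nthPrime 2 := by
          have := nthPrime_lt (le_refl 1) one_lt_two
          rwa [nthPrime_one] at this
        omega
      obtain ⟨t, ht⟩ := hModd
      exact ⟨t, by omega, by omega⟩
  have hQ2 : 2 ≤ Q := by rcases hQform with h | ⟨t, h, ht⟩ <;> omega
  have hnot4 : ¬ (4 ∣ Q) := by rcases hQform with h | ⟨t, h, ht⟩ <;> omega
  refine ⟨⟨⟨?_, ?_⟩, ?_⟩, ?_⟩
  · -- positive words at k = Q - 1
    intro w hw
    rcases hw with ⟨i, hi, rfl⟩ | rfl
    · show x ∈ wPer x y (nthPrime i) (0 + (Q - 1))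
      rw [x_mem_wPer hxy]
      have : 0 + (Q - 1) + 1 = Q := by omega
      rw [this]
      exact hdvdQ i hi
    · show x ∈ w4' x y (0 + (Q - 1))
      rcases hQform with h | ⟨t, h, ht⟩
      · simp [h, w4']
      · have h0 : 0 + (Q - 1) ≠ 0 := by omega
        have h1 : 0 + (Q - 1) ≠ 1 := by omega
        rw [w4', if_neg h0, if_neg h1, x_mem_wPer hxy]
        exact ⟨t, by omega⟩
  · -- negative word at k = Q - 1
    intro w hw
    rw [negWords, Set.mem_singleton_iff] at hw
    subst hw
    show x ∉ wPer x y 4 (0 + (Q - 1))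
    rw [wPer]
    have : ¬ (4 ∣ 0 + (Q - 1) + 1) := by
      intro hc; apply hnot4; have : 0 + (Q - 1) + 1 = Q := by omega
      rwa [this] at hc
    rw [if_neg this]
    simpa using hxy
  · -- lower bound
    rintro k ⟨hpos, _⟩
    have hdvd : ∀ i ∈ Finset.Icc 1 n, nthPrime i ∣ k + 1 := by
      intro i hi
      have := hpos (wShift (wPer x y (nthPrime i)) k) (Or.inl ⟨i, hi, rfl⟩)
      rw [show wShift (wPer x y (nthPrime i)) k 0 = wPer x y (nthPrime i) k from by
        simp [wShift], x_mem_wPer hxy] at this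
      exact this
    have hinj : Set.InjOn nthPrime (Finset.Icc 1 n) := by
      intro a ha b hb hab
      simp only [Finset.coe_Icc, Set.mem_Icc] at ha hb
      by_contra hne
      rcases lt_or_gt_of_ne hne with h | h
      · exact absurd hab (ne_of_lt (nthPrime_lt ha.1 h))
      · exact absurd hab.symm (ne_of_lt (nthPrime_lt hb.1 h))
    have hQim : Q = ∏ p ∈ (Finset.Icc 1 n).image nthPrime, p := by
      rw [Finset.prod_image (fun a ha b hb => hinj ha hb)]
    have hQdvd : Q ∣ k + 1 := by
      rw [hQim]
      refine Finset.prod_primes_dvd _ ?_ ?_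
      · intro p hp
        simp only [Finset.mem_image] at hp
        obtain ⟨i, _, rfl⟩ := hp
        exact (nthPrime_prime i).prime
      · intro p hp
        simp only [Finset.mem_image] at hp
        obtain ⟨i, hi, rfl⟩ := hp
        exact hdvd i hi
    have := Nat.le_of_dvd (by omega) hQdvd
    omega
  · -- part (2)
    intro j hj
    rw [y_not_mem_wPer hxy] at hj ⊢
    exact dvd_trans ⟨2, rfl⟩ hj
end
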